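/- arXiv:2605.07077 — 4 statements merged into one kernel-verified Lean document; each statement's English description precedes it below -/
import Mathlib

section
/- For integers 1 ≤ j ≤ k, we have j · Σ_{i=j}^{k} c(k,i) · S(i,j) = k · Σ_{i=j}^{k} c(k-1,i-1) · S(i,j), where c(n,k) are the unsigned Stirling numbers of the first kind and S(n,k) are the Stirling numbers of the second kind. -/
open scoped Classical
open Polynomial

/-- The unsigned Stirling number of the first kind `c(n,k)`: the number of
permutations of an `n`-element set with exactly `k` disjoint cycles
(fixed points count as cycles). -/
noncomputable def stirlingFirst (n k : ℕ) : ℕ :=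
  (Finset.univ.filter fun σ : Equiv.Perm (Fin n) =>
    Multiset.card σ.cycleType + (n - σ.support.card) = k).card

/-- The Stirling number of the second kind `S(n,k)`: the number of partitions of an
`n`-element set into exactly `k` nonempty parts. -/
noncomputable def stirlingSecond (n k : ℕ) : ℕ :=
  (Finset.univ.filter fun P : Finset (Finset (Fin n)) =>
    P.card = k ∧ ∅ ∉ P ∧ (P : Set (Finset (Fin n))).PairwiseDisjoint id ∧
      P.sup id = Finset.univ).card

/-- A matroid on a finite ground set `E`, presented by its rank function. -/
structure FinMatroid (α : Type*) [DecidableEq α] where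
  E : Finset α
  rk : Finset α → ℕ
  rk_empty : rk ∅ = 0
  rk_le_card : ∀ S : Finset α, rk S ≤ S.card
  rk_mono : ∀ ⦃S T : Finset α⦄, S ⊆ T → rk S ≤ rk T
  rk_submod : ∀ S T : Finset α, rk (S ∪ T) + rk (S ∩ T) ≤ rk S + rk T

namespace FinMatroid

variable {α : Type*} [DecidableEq α]

/-- A flat of a matroid: a subset of the ground set such that adding any new element
of the ground set increases the rank. -/
def IsFlat (M : FinMatroid α) (F : Finset α) : Prop :=
  F ⊆ M.E ∧ ∀ x ∈ M.E, x ∉ F → M.rk F < M.rk (insert x F)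

/-- The lattice of flats `L(M)`, as a finset. -/
noncomputable def flats (M : FinMatroid α) : Finset (Finset α) :=
  M.E.powerset.filter fun F => M.IsFlat F

/-- The proper flats, i.e. flats different from the ground set. -/
noncomputable def properFlats (M : FinMatroid α) : Finset (Finset α) :=
  M.flats.filter fun F => F ≠ M.E

/-- A matroid is loopless if every singleton of the ground set has rank one. -/
def Loopless (M : FinMatroid α) : Prop := ∀ x ∈ M.E, M.rk {x} = 1

/-- The restriction `M|F` of a matroid to a subset of its ground set. -/
def restrict (M : FinMatroid α) (F : Finset α) : FinMatroid α :=
  ⟨F, M.rk, M.rk_empty, M.rk_le_card, M.rk_mono, M.rk_submod⟩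

/-- The characteristic polynomial attached to a ground set and a rank function:
`χ(q) = ∑_{S ⊆ E} (-1)^{|S|} q^{rk E - rk S}`. -/
noncomputable def charPolyAux (E : Finset α) (rk : Finset α → ℕ) : Polynomial ℚ :=
  ∑ S ∈ E.powerset, (-1 : Polynomial ℚ) ^ S.card * X ^ (rk E - rk S)

/-- The characteristic polynomial `χ_M(q)` of a matroid. -/
noncomputable def charPoly (M : FinMatroid α) : Polynomial ℚ := charPolyAux M.E M.rk

/-- The characteristic polynomial `χ_{M/F}(q)` of the contraction of `M` at `F`. -/
noncomputable def contractCharPoly (M : FinMatroid α) (F : Finset α) : Polynomial ℚ :=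
  charPolyAux (M.E \ F) fun S => M.rk (S ∪ F) - M.rk F

/-- The reduced characteristic polynomial `χ̄(q) = χ(q)/(q-1)`. -/
noncomputable def reducedCharPoly (p : Polynomial ℚ) : Polynomial ℚ := p /ₘ (X - C 1)

/-- The value `χ̄_{M/F}(1)` of the reduced characteristic polynomial of `M/F` at `q = 1`. -/
noncomputable def redCharContractOne (M : FinMatroid α) (F : Finset α) : ℚ :=
  (reducedCharPoly (M.contractCharPoly F)).eval 1

/-- The truncation `tr(M)`, with rank function `S ↦ min (rk S) (rk M - 1)`. -/
def truncation (M : FinMatroid α) : FinMatroid α where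
  E := M.E
  rk S := min (M.rk S) (M.rk M.E - 1)
  rk_empty := by simp [M.rk_empty]
  rk_le_card S := le_trans (min_le_left _ _) (M.rk_le_card S)
  rk_mono S T h := min_le_min (M.rk_mono h) le_rfl
  rk_submod S T := by
    have h1 := M.rk_submod S T
    have h2 : M.rk S ≤ M.rk (S ∪ T) := M.rk_mono Finset.subset_union_left
    have h3 : M.rk T ≤ M.rk (S ∪ T) := M.rk_mono Finset.subset_union_right
    have h4 : M.rk (S ∩ T) ≤ M.rk S := M.rk_mono Finset.inter_subset_left
    simp only [Nat.min_def]
    split_ifs <;> omega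

/-- The direct sum `M₁ ⊕ M₂` of two matroids on disjoint ground sets. -/
def directSum (M₁ M₂ : FinMatroid α) (h : Disjoint M₁.E M₂.E) : FinMatroid α where
  E := M₁.E ∪ M₂.E
  rk S := M₁.rk (S ∩ M₁.E) + M₂.rk (S ∩ M₂.E)
  rk_empty := by simp [M₁.rk_empty, M₂.rk_empty]
  rk_le_card S := by
    have hd : Disjoint (S ∩ M₁.E) (S ∩ M₂.E) :=
      h.mono Finset.inter_subset_right Finset.inter_subset_right
    calc M₁.rk (S ∩ M₁.E) + M₂.rk (S ∩ M₂.E)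
        ≤ (S ∩ M₁.E).card + (S ∩ M₂.E).card :=
          add_le_add (M₁.rk_le_card _) (M₂.rk_le_card _)
      _ = ((S ∩ M₁.E) ∪ (S ∩ M₂.E)).card := (Finset.card_union_of_disjoint hd).symm
      _ ≤ S.card := Finset.card_le_card
          (Finset.union_subset Finset.inter_subset_left Finset.inter_subset_left)
  rk_mono S T hST :=
    add_le_add (M₁.rk_mono (Finset.inter_subset_inter hST subset_rfl))
      (M₂.rk_mono (Finset.inter_subset_inter hST subset_rfl))
  rk_submod S T := by
    have e1 : ∀ E' : Finset α, (S ∪ T) ∩ E' = (S ∩ E') ∪ (T ∩ E') := by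
      intro E'; ext x; simp only [Finset.mem_union, Finset.mem_inter]; tauto
    have e2 : ∀ E' : Finset α, (S ∩ T) ∩ E' = (S ∩ E') ∩ (T ∩ E') := by
      intro E'; ext x; simp only [Finset.mem_inter]; tauto
    simp only [e1, e2]
    have h1 := M₁.rk_submod (S ∩ M₁.E) (T ∩ M₁.E)
    have h2 := M₂.rk_submod (S ∩ M₂.E) (T ∩ M₂.E)
    omega

/-- The free matroid `U_{n,n}` on a ground set `E` with `|E| = n`. -/
def freeM (E : Finset α) : FinMatroid α where
  E := E
  rk S := (S ∩ E).card
  rk_empty := by simp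
  rk_le_card S := Finset.card_le_card Finset.inter_subset_left
  rk_mono S T h := Finset.card_le_card (Finset.inter_subset_inter h subset_rfl)
  rk_submod S T := by
    have e1 : (S ∪ T) ∩ E = (S ∩ E) ∪ (T ∩ E) := by
      ext x; simp only [Finset.mem_union, Finset.mem_inter]; tauto
    have e2 : (S ∩ T) ∩ E = (S ∩ E) ∩ (T ∩ E) := by
      ext x; simp only [Finset.mem_inter]; tauto
    simp only [e1, e2]
    exact (Finset.card_union_add_card_inter _ _).le

/-- The uniform matroid `U_{r,n}` on a ground set `E` with `|E| = n`. -/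
def uniformM (E : Finset α) (r : ℕ) : FinMatroid α where
  E := E
  rk S := min (S ∩ E).card r
  rk_empty := by simp
  rk_le_card S := le_trans (min_le_left _ _) (Finset.card_le_card Finset.inter_subset_left)
  rk_mono S T h := min_le_min (Finset.card_le_card (Finset.inter_subset_inter h subset_rfl)) le_rfl
  rk_submod S T := by
    have e1 : (S ∪ T) ∩ E = (S ∩ E) ∪ (T ∩ E) := by
      ext x; simp only [Finset.mem_union, Finset.mem_inter]; tauto
    have e2 : (S ∩ T) ∩ E = (S ∩ E) ∩ (T ∩ E) := by
      ext x; simp only [Finset.mem_inter]; tauto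
    have h3 := Finset.card_union_add_card_inter (S ∩ E) (T ∩ E)
    have h4 : (S ∩ E).card ≤ ((S ∩ E) ∪ (T ∩ E)).card :=
      Finset.card_le_card Finset.subset_union_left
    have h5 : (T ∩ E).card ≤ ((S ∩ E) ∪ (T ∩ E)).card :=
      Finset.card_le_card Finset.subset_union_right
    simp only [e1, e2, Nat.min_def]
    split_ifs <;> omega

/-- The closure `cl_M(S)` of a set in a matroid: all ground set elements whose
addition does not increase the rank. -/
def cl (M : FinMatroid α) (S : Finset α) : Finset α :=
  M.E.filter fun x => M.rk (insert x S) = M.rk S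

/-- The rank function of the free extension `M + e`. -/
def freeExtRk (M : FinMatroid α) (e : α) (S : Finset α) : ℕ :=
  if e ∈ S then
    (if M.cl (S.erase e) = M.E then M.rk (S.erase e) else M.rk (S.erase e) + 1)
  else M.rk S

/-- The free extension `M + e`, realized as the truncation of `M ⊕ U_{1,1}`. -/
def freeExtension (M : FinMatroid α) (e : α) (he : e ∉ M.E) : FinMatroid α :=
  truncation (M.directSum (freeM {e}) (Finset.disjoint_singleton_right.mpr he))

/-- Predicate expressing that `Z` is the (combinatorial) topological zeta function:
`Z` of the trivial matroid is `1` and `Z` satisfies the defining recurrence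
`Z_M(s) = (1/(|E|s + rk M)) ∑_{F proper flat} χ̄_{M/F}(1) ⬝ Z_{M|F}(s)`. -/
def IsTopZeta (Z : FinMatroid α → RatFunc ℚ) : Prop :=
  (∀ M : FinMatroid α, M.E = ∅ → Z M = 1) ∧
  (∀ M : FinMatroid α, M.E.Nonempty →
    Z M = (∑ F ∈ M.properFlats,
        RatFunc.C (M.redCharContractOne F) * Z (M.restrict F)) /
      ((M.E.card : RatFunc ℚ) * RatFunc.X + (M.rk M.E : RatFunc ℚ)))

/-- Predicate expressing that `μ M F` is the Möbius function value `μ(F, E)` in the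
lattice of flats of `M`: for every flat `F`, `∑_{G flat, F ⊆ G} μ(G,E) = δ_{F,E}`. -/
def IsFlatMobius (μ : FinMatroid α → Finset α → ℤ) : Prop :=
  ∀ (M : FinMatroid α) (F : Finset α), M.IsFlat F →
    (∑ G ∈ M.flats.filter fun G => F ⊆ G, μ M G) = if F = M.E then 1 else 0

/-- Predicate expressing that `Y` is the Möbius inversion of `Z`:
`Y_M(s) = ∑_{F ∈ L(M)} μ(F,E) Z_{M|F}(s)`. -/
def IsMobiusInv (μ : FinMatroid α → Finset α → ℤ)
    (Z Y : FinMatroid α → RatFunc ℚ) : Prop :=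
  ∀ M : FinMatroid α, Y M = ∑ F ∈ M.flats, (μ M F : RatFunc ℚ) * Z (M.restrict F)

/-- Predicate expressing that `Z` is the topological zeta function, viewed as an actual
function `ℝ → ℝ` (away from poles): base case `1` for the trivial matroid, and the
defining recurrence pointwise. -/
def IsTopZetaFun (Z : FinMatroid α → ℝ → ℝ) : Prop :=
  (∀ M : FinMatroid α, M.E = ∅ → Z M = fun _ => 1) ∧
  (∀ M : FinMatroid α, M.E.Nonempty → ∀ s : ℝ,
    Z M s = (∑ F ∈ M.properFlats, (M.redCharContractOne F : ℝ) * Z (M.restrict F) s) /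
      ((M.E.card : ℝ) * s + (M.rk M.E : ℝ)))

end FinMatroid


/-! ### Auxiliary development for STATEMENT 0 -/

section AuxPerm

open Equiv Equiv.Perm

variable {α : Type*} [DecidableEq α] [Fintype α]

/-- Number of orbits (cycles incl. fixed points) of a permutation. -/
def ccount (f : Perm α) : ℕ :=
  Multiset.card f.cycleType + (Fintype.card α - f.support.card)

theorem ccount_swap_mul (σ : Perm α) (a : α) (ha : σ a ≠ a) :
    ccount (swap a (σ a) * σ) = ccount σ + 1 := by
  classical
  have hmem : σ.cycleOf a ∈ σ.cycleFactorsFinset :=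
    cycleOf_mem_cycleFactorsFinset_iff.mpr (mem_support.mpr ha)
  set c := σ.cycleOf a with hc
  set g := σ * c⁻¹ with hg
  have hdisj : Perm.Disjoint g c := disjoint_mul_inv_of_mem_cycleFactorsFinset hmem
  have hσ : g * c = σ := inv_mul_cancel_right σ c
  have hcyc : c.IsCycle := (mem_cycleFactorsFinset_iff.mp hmem).1
  have hca : c a = σ a := cycleOf_apply_self σ a
  have hasup : a ∈ c.support := by rw [mem_support, hca]; exact ha
  have hcaa : c a ≠ a := mem_support.mp hasup
  have hsa_sup : c a ∈ c.support := apply_mem_support.mpr hasup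
  have hgsupp : _root_.Disjoint g.support c.support := disjoint_iff_disjoint_support.mp hdisj
  rw [← hca]
  set b := c a with hb
  have hdswap : Perm.Disjoint (swap a b) g := by
    intro x
    by_cases hx : x = a ∨ x = c a
    · right
      rcases hx with h | h <;> subst h
      · exact notMem_support.mp (Finset.disjoint_right.mp hgsupp hasup)
      · exact notMem_support.mp (Finset.disjoint_right.mp hgsupp hsa_sup)
    · push_neg at hx
      exact Or.inl (swap_apply_of_ne_of_ne hx.1 hx.2)
  have hτ : swap a b * σ = g * (swap a b * c) := by
    rw [← hσ, ← mul_assoc, hdswap.commute.eq, mul_assoc]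
  have hctσ : Multiset.card σ.cycleType = Multiset.card g.cycleType + 1 := by
    rw [← hσ, hdisj.cycleType_mul, Multiset.card_add, hcyc.cycleType]
    simp
  have hsσ : σ.support.card = g.support.card + c.support.card := by
    rw [← hσ, hdisj.support_mul, Finset.card_union_of_disjoint hgsupp]
  have hNσ : σ.support.card ≤ Fintype.card α := by
    simpa using Finset.card_le_univ σ.support
  have h2le : 2 ≤ c.support.card := hcyc.two_le_card_support
  by_cases h2 : c (c a) = a
  · have hcs : c = swap a b := hcyc.eq_swap_of_apply_apply_eq_self hcaa h2
    have hone : swap a b * c = 1 := by rw [hcs]; exact swap_mul_self a (c a)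
    have hsc2 : c.support.card = 2 := by rw [hcs]; exact card_support_swap (Ne.symm hcaa)
    rw [hτ, hone, mul_one]
    unfold ccount
    omega
  · have hcyc2 : IsCycle (swap a b * c) := hcyc.swap_mul hcaa h2
    have hsupp2 : (swap a b * c).support = c.support \ {a} :=
      support_swap_mul_eq c a h2
    have hcard2 : (swap a b * c).support.card = c.support.card - 1 := by
      rw [hsupp2, Finset.sdiff_singleton_eq_erase, Finset.card_erase_of_mem hasup]
    have hdisj2 : Perm.Disjoint g (swap a b * c) := by
      rw [disjoint_iff_disjoint_support, hsupp2]
      exact hgsupp.mono_right (Finset.sdiff_subset)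
    have hct : Multiset.card (swap a b * σ).cycleType =
        Multiset.card g.cycleType + 1 := by
      rw [hτ, hdisj2.cycleType_mul, Multiset.card_add, hcyc2.cycleType]
      simp
    have hs : (swap a b * σ).support.card = g.support.card + (c.support.card - 1) := by
      rw [hτ, hdisj2.support_mul,
        Finset.card_union_of_disjoint (hgsupp.mono_right (hsupp2 ▸ Finset.sdiff_subset)), hcard2]
    unfold ccount
    omega

theorem ccount_pos (σ : Perm α) (h : 1 ≤ Fintype.card α) : 1 ≤ ccount σ := by
  unfold ccount
  by_cases hs : σ.support = ∅
  · rw [hs]; simp; omega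
  · have h1 : σ ≠ 1 := by
      intro h1; exact hs (by simp [h1])
    have := card_cycleType_pos.mpr h1
    omega

theorem decomposeFin_symm_eq {n : ℕ} (p : Fin (n + 1)) (e : Perm (Fin n)) :
    Equiv.Perm.decomposeFin.symm (p, e) = swap 0 p * Equiv.Perm.decomposeFin.symm (0, e) := by
  ext x
  refine Fin.cases ?_ (fun i => ?_) x <;> simp

def finSubtypeEquiv (n : ℕ) : Fin n ≃ {x : Fin (n + 1) // x ≠ 0} where
  toFun i := ⟨i.succ, Fin.succ_ne_zero i⟩
  invFun y := y.1.pred y.2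
  left_inv i := by simp
  right_inv y := by simp

theorem decomposeFin_symm_zero_eq {n : ℕ} (e : Perm (Fin n)) :
    Equiv.Perm.decomposeFin.symm (0, e) = e.extendDomain (finSubtypeEquiv n) := by
  ext x
  refine Fin.cases ?_ (fun i => ?_) x
  · rw [Equiv.Perm.decomposeFin_symm_apply_zero,
      Equiv.Perm.extendDomain_apply_not_subtype _ _ (by simp)]
  · rw [Equiv.Perm.decomposeFin_symm_apply_succ]
    have : (i.succ : Fin (n + 1)) = ((finSubtypeEquiv n i : {x : Fin (n+1) // x ≠ 0}) : Fin (n+1)) := rfl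
    rw [this, Equiv.Perm.extendDomain_apply_image]
    simp [finSubtypeEquiv]

theorem ccount_lift {n : ℕ} (e : Perm (Fin n)) :
    ccount (Equiv.Perm.decomposeFin.symm (0, e)) = ccount e + 1 := by
  rw [decomposeFin_symm_zero_eq]
  have h1 : (e.extendDomain (finSubtypeEquiv n)).cycleType = e.cycleType :=
    Equiv.Perm.cycleType_extendDomain _
  have h2 : (e.extendDomain (finSubtypeEquiv n)).support.card = e.support.card :=
    Equiv.Perm.card_support_extend_domain _
  have h3 : e.support.card ≤ n := by simpa using Finset.card_le_univ e.support
  unfold ccount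
  rw [h1, h2, Fintype.card_fin, Fintype.card_fin]
  omega

theorem ccount_decomposeFin {n : ℕ} (p : Fin (n + 1)) (e : Perm (Fin n)) :
    ccount (Equiv.Perm.decomposeFin.symm (p, e)) =
      if p = 0 then ccount e + 1 else ccount e := by
  split_ifs with hp
  · subst hp; exact ccount_lift e
  · set σ := Equiv.Perm.decomposeFin.symm (p, e) with hσ
    have h0 : σ 0 = p := Equiv.Perm.decomposeFin_symm_apply_zero p e
    have hne : σ 0 ≠ 0 := by rw [h0]; exact hp
    have key := ccount_swap_mul σ 0 hne
    have : swap 0 (σ 0) * σ = Equiv.Perm.decomposeFin.symm (0, e) := by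
      rw [h0, hσ, decomposeFin_symm_eq p e, ← mul_assoc, swap_mul_self, one_mul]
    rw [this, ccount_lift e] at key
    omega

theorem stirlingFirst_eq_ccount (n k : ℕ) :
    stirlingFirst n k = (Finset.univ.filter fun σ : Perm (Fin n) => ccount σ = k).card := by
  unfold stirlingFirst ccount
  simp [Fintype.card_fin]

theorem stirlingFirst_succ (n k : ℕ) :
    stirlingFirst (n + 1) (k + 1) = stirlingFirst n k + n * stirlingFirst n (k + 1) := by
  rw [stirlingFirst_eq_ccount (n+1)]
  have h1 : (Finset.univ.filter fun σ : Perm (Fin (n+1)) => ccount σ = k+1).card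
      = ∑ p : Fin (n+1), ∑ e : Perm (Fin n),
        (if ccount (Equiv.Perm.decomposeFin.symm (p, e)) = k + 1 then 1 else 0) := by
    rw [Finset.univ_perm_fin_succ, Finset.filter_map, Finset.card_map, Finset.card_filter,
      ← Finset.univ_product_univ, Finset.sum_product]
    rfl
  have hA : (∑ e : Perm (Fin n), if ccount e + 1 = k + 1 then (1:ℕ) else 0)
      = stirlingFirst n k := by
    rw [stirlingFirst_eq_ccount, Finset.card_filter]
    simp
  have hB : (∑ e : Perm (Fin n), if ccount e = k + 1 then (1:ℕ) else 0)
      = stirlingFirst n (k+1) := by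
    rw [stirlingFirst_eq_ccount, Finset.card_filter]
  rw [h1]
  simp only [ccount_decomposeFin]
  rw [Fin.sum_univ_succ]
  simp only [if_pos rfl, Fin.succ_ne_zero, if_false, if_true, eq_self_iff_true, hA, hB,
    Finset.sum_const, Finset.card_univ, Fintype.card_fin, smul_eq_mul]

theorem stirlingFirst_succ_zero (n : ℕ) : stirlingFirst (n + 1) 0 = 0 := by
  rw [stirlingFirst_eq_ccount, Finset.card_eq_zero, Finset.filter_eq_empty_iff]
  intro σ _
  have := ccount_pos σ (by simp)
  omega

theorem stirlingFirst_zero (k : ℕ) : stirlingFirst 0 k = if k = 0 then 1 else 0 := by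
  rw [stirlingFirst_eq_ccount]
  have huniv : (Finset.univ : Finset (Perm (Fin 0))) = {1} := by
    apply Finset.eq_singleton_iff_unique_mem.mpr
    exact ⟨Finset.mem_univ _, fun σ _ => Subsingleton.elim _ _⟩
  rw [huniv]
  have hcc : ccount (1 : Perm (Fin 0)) = 0 := by
    unfold ccount
    simp
  split_ifs with hk
  · subst hk; rw [Finset.filter_singleton, if_pos hcc]; rfl
  · rw [Finset.filter_singleton, if_neg (by omega)]; rfl

end AuxPerm

section AuxPart

variable {α : Type*} [DecidableEq α]

/-- Partitions of the finset `s` into `j` nonempty parts. -/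
noncomputable def partFinset (s : Finset α) (j : ℕ) : Finset (Finset (Finset α)) :=
  s.powerset.powerset.filter fun P =>
    P.card = j ∧ ∅ ∉ P ∧ (P : Set (Finset α)).PairwiseDisjoint id ∧ P.sup id = s

noncomputable def partCount (s : Finset α) (j : ℕ) : ℕ := (partFinset s j).card

theorem mem_pp {t : Finset α} {P : Finset (Finset α)} :
    P ∈ t.powerset.powerset ↔ ∀ B ∈ P, B ⊆ t := by
  simp [Finset.mem_powerset, Finset.subset_iff]

theorem mem_partFinset {s : Finset α} {j : ℕ} {P : Finset (Finset α)} :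
    P ∈ partFinset s j ↔
      P.card = j ∧ ∅ ∉ P ∧ (P : Set (Finset α)).PairwiseDisjoint id ∧ P.sup id = s := by
  unfold partFinset
  rw [Finset.mem_filter, and_iff_right_iff_imp]
  rintro ⟨-, -, -, hsup⟩
  rw [mem_pp]
  intro B hB
  rw [← hsup]
  exact Finset.le_sup (f := id) hB

theorem block_subset {s : Finset α} {j : ℕ} {P : Finset (Finset α)} (hP : P ∈ partFinset s j)
    {B : Finset α} (hB : B ∈ P) : B ⊆ s := by
  rw [← (mem_partFinset.mp hP).2.2.2]
  exact Finset.le_sup (f := id) hB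

theorem partCount_self_zero {s : Finset α} :
    partCount s 0 = if s = ∅ then 1 else 0 := by
  unfold partCount
  split_ifs with hs
  · subst hs
    rw [Finset.card_eq_one]
    refine ⟨∅, ?_⟩
    apply Finset.eq_singleton_iff_unique_mem.mpr
    constructor
    · rw [mem_partFinset]
      simp
    · intro P hP
      exact Finset.card_eq_zero.mp (mem_partFinset.mp hP).1
  · rw [Finset.card_eq_zero, Finset.eq_empty_iff_forall_notMem]
    intro P hP
    obtain ⟨hcard, -, -, hsup⟩ := mem_partFinset.mp hP
    rw [Finset.card_eq_zero.mp hcard] at hsup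
    simp at hsup
    exact hs hsup.symm

theorem partCount_empty (j : ℕ) :
    partCount (∅ : Finset α) j = if j = 0 then 1 else 0 := by
  split_ifs with hj
  · subst hj; rw [partCount_self_zero]; simp
  · unfold partCount
    rw [Finset.card_eq_zero, Finset.eq_empty_iff_forall_notMem]
    intro P hP
    obtain ⟨hcard, hem, -, hsup⟩ := mem_partFinset.mp hP
    have : P = ∅ ∨ P = {∅} := by
      have hsub : ∀ B ∈ P, B = ∅ := by
        intro B hB
        have := block_subset hP hB
        exact Finset.subset_empty.mp this
      rcases Finset.eq_empty_or_nonempty P with h | ⟨B, hB⟩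
      · exact Or.inl h
      · right
        apply Finset.eq_singleton_iff_unique_mem.mpr
        exact ⟨(hsub B hB) ▸ hB, fun C hC => hsub C hC⟩
    rcases this with h | h
    · rw [h] at hcard; simp at hcard; omega
    · rw [h] at hem; simp at hem

theorem partCount_insert {s : Finset α} {a : α} (ha : a ∉ s) (j : ℕ) :
    partCount (insert a s) (j + 1) = partCount s j + (j + 1) * partCount s (j + 1) := by
  classical
  -- split on whether {a} is a singleton block
  have hsplit := Finset.card_filter_add_card_filter_not
    (s := partFinset (insert a s) (j+1)) (p := fun P => {a} ∈ P)
  set T1 := (partFinset (insert a s) (j+1)).filter (fun P => {a} ∈ P) with hT1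
  set T2 := (partFinset (insert a s) (j+1)).filter (fun P => ¬ {a} ∈ P) with hT2
  -- blocks of a partition of s don't contain a
  have hnotmem : ∀ {jj : ℕ} {R : Finset (Finset α)}, R ∈ partFinset s jj →
      ∀ {B : Finset α}, B ∈ R → a ∉ B := by
    intro jj R hR B hB haB
    exact ha (block_subset hR hB haB)
  have hsing_notmem : ∀ {jj : ℕ} {R : Finset (Finset α)}, R ∈ partFinset s jj → {a} ∉ R := by
    intro jj R hR h
    exact hnotmem hR h (Finset.mem_singleton_self a)
  -- Part 1 : card T1 = partCount s j
  have hpart1 : T1.card = partCount s j := by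
    rw [eq_comm]
    apply Finset.card_bij (fun R _ => insert ({a} : Finset α) R)
    · -- maps into T1
      intro R hR
      obtain ⟨hcard, hem, hpd, hsup⟩ := mem_partFinset.mp hR
      rw [hT1, Finset.mem_filter]
      refine ⟨mem_partFinset.mpr ⟨?_, ?_, ?_, ?_⟩, Finset.mem_insert_self _ _⟩
      · rw [Finset.card_insert_of_notMem (hsing_notmem hR), hcard]
      · simp only [Finset.mem_insert]
        push_neg
        exact ⟨fun h => absurd h.symm (Finset.singleton_ne_empty a), hem⟩
      · rw [Finset.coe_insert]
        apply Set.pairwiseDisjoint_insert.mpr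
        refine ⟨hpd, fun B hB _ => ?_⟩
        simp only [id]
        rw [Finset.disjoint_left]
        intro x hx
        rw [Finset.mem_singleton] at hx
        subst hx
        exact hnotmem hR hB
      · rw [Finset.sup_insert, hsup]
        rfl
    · -- injective
      intro R hR R' hR' h
      have h1 := hsing_notmem hR
      have h2 := hsing_notmem hR'
      have := congrArg (fun X => Finset.erase X ({a} : Finset α)) h
      simpa [Finset.erase_insert h1, Finset.erase_insert h2] using this
    · -- surjective
      intro P hP
      rw [hT1, Finset.mem_filter] at hP
      obtain ⟨hPmem, haP⟩ := hP
      obtain ⟨hcard, hem, hpd, hsup⟩ := mem_partFinset.mp hPmem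
      have hblocks : ∀ B ∈ P.erase {a}, a ∉ B := by
        intro B hB haB
        have hBne : B ≠ {a} := Finset.ne_of_mem_erase hB
        have hBP : B ∈ P := Finset.mem_of_mem_erase hB
        have := hpd haP hBP (Ne.symm hBne)
        exact (Finset.disjoint_left.mp this (Finset.mem_singleton_self a)) haB
      refine ⟨P.erase {a}, ?_, ?_⟩
      · apply mem_partFinset.mpr
        refine ⟨?_, ?_, ?_, ?_⟩
        · rw [Finset.card_erase_of_mem haP, hcard]
          omega
        · intro h
          exact hem (Finset.mem_of_mem_erase h)
        · exact hpd.subset (by intro x hx; exact Finset.mem_of_mem_erase hx)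
        · apply Finset.Subset.antisymm
          · intro x hx
            rw [Finset.mem_sup] at hx
            obtain ⟨B, hB, hxB⟩ := hx
            have hxs : x ∈ insert a s := by
              rw [← hsup]
              exact Finset.mem_sup.mpr ⟨B, Finset.mem_of_mem_erase hB, hxB⟩
            rcases Finset.mem_insert.mp hxs with h | h
            · exact absurd (h ▸ hxB) (hblocks B hB)
            · exact h
          · intro x hx
            have : x ∈ P.sup id := by rw [hsup]; exact Finset.mem_insert_of_mem hx
            rw [Finset.mem_sup] at this
            obtain ⟨B, hB, hxB⟩ := this
            have hBne : B ≠ {a} := by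
              intro h
              subst h
              simp only [id, Finset.mem_singleton] at hxB
              exact ha (hxB ▸ hx)
            exact Finset.mem_sup.mpr ⟨B, Finset.mem_erase.mpr ⟨hBne, hB⟩, hxB⟩
      · exact Finset.insert_erase haP
  -- Part 2 : card T2 = (j+1) * partCount s (j+1)
  have hpart2 : T2.card = (j + 1) * partCount s (j + 1) := by
    have hWcard : ((partFinset s (j+1)).sigma (fun R => R)).card
        = (j + 1) * partCount s (j + 1) := by
      rw [Finset.card_sigma,
        Finset.sum_congr rfl (fun R hR => (mem_partFinset.mp hR).1),
        Finset.sum_const, smul_eq_mul, mul_comm]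
      rfl
    rw [← hWcard]
    apply (Finset.card_bij
      (fun (x : Σ _ : Finset (Finset α), Finset α) _ =>
        insert (insert a x.2) (x.1.erase x.2)) ?_ ?_ ?_).symm
    · -- well-defined
      rintro ⟨R, C⟩ hx
      rw [Finset.mem_sigma] at hx
      obtain ⟨hR, hCR⟩ := hx
      dsimp only at hR hCR
      obtain ⟨hcard, hem, hpd, hsup⟩ := mem_partFinset.mp hR
      have haC : a ∉ C := hnotmem hR hCR
      have hCne : C ≠ ∅ := fun h => hem (h ▸ hCR)
      have hnotin : insert a C ∉ R.erase C := by
        intro h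
        exact hnotmem hR (Finset.mem_of_mem_erase h) (Finset.mem_insert_self a C)
      rw [hT2, Finset.mem_filter]
      constructor
      · apply mem_partFinset.mpr
        refine ⟨?_, ?_, ?_, ?_⟩
        · rw [Finset.card_insert_of_notMem hnotin, Finset.card_erase_of_mem hCR, hcard]
          omega
        · simp only [Finset.mem_insert]
          push_neg
          refine ⟨fun h => (Finset.insert_ne_empty a C) h.symm, fun h => hem (Finset.mem_of_mem_erase h)⟩
        · rw [Finset.coe_insert]
          apply Set.pairwiseDisjoint_insert.mpr
          refine ⟨hpd.subset (by intro x hx; exact Finset.mem_of_mem_erase hx), ?_⟩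
          intro B hB _
          simp only [Finset.mem_coe] at hB
          have hBC : B ≠ C := Finset.ne_of_mem_erase hB
          have hdisjBC : Disjoint C B := hpd hCR (Finset.mem_of_mem_erase hB) (Ne.symm hBC)
          simp only [id] at hdisjBC ⊢
          rw [Finset.disjoint_left]
          intro x hx
          rcases Finset.mem_insert.mp hx with h | h
          · subst h; exact hnotmem hR (Finset.mem_of_mem_erase hB)
          · exact Finset.disjoint_left.mp hdisjBC h
        · rw [Finset.sup_insert]
          have h1 : R.sup id = C ⊔ (R.erase C).sup id := by
            conv_lhs => rw [← Finset.insert_erase hCR]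
            rw [Finset.sup_insert]
            rfl
          have h2 : (insert a C : Finset α) = {a} ⊔ C := rfl
          simp only [id] at h1 ⊢
          rw [h2, sup_assoc, ← h1, hsup]
          ext x
          simp [Finset.mem_insert]
      · -- {a} not a block
        intro h
        rcases Finset.mem_insert.mp h with h | h
        · obtain ⟨x, hxC⟩ := Finset.nonempty_iff_ne_empty.mpr hCne
          have hx1 : x ∈ ({a} : Finset α) := by
            rw [h]; exact Finset.mem_insert_of_mem hxC
          rw [Finset.mem_singleton] at hx1
          exact haC (hx1 ▸ hxC)
        · exact hnotmem hR (Finset.mem_of_mem_erase h) (Finset.mem_singleton_self a)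
    · -- injective
      rintro ⟨R, C⟩ hx ⟨R', C'⟩ hx' h
      rw [Finset.mem_sigma] at hx hx'
      obtain ⟨hR, hCR⟩ := hx
      obtain ⟨hR', hCR'⟩ := hx'
      dsimp only at hR hCR hR' hCR' h
      have haC : a ∉ C := hnotmem hR hCR
      have haC' : a ∉ C' := hnotmem hR' hCR'
      have hmem1 : (insert a C : Finset α) ∈ insert (insert a C') (R'.erase C') := by
        rw [← h]; exact Finset.mem_insert_self _ _
      have hCC : (insert a C : Finset α) = insert a C' := by
        rcases Finset.mem_insert.mp hmem1 with h1 | h1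
        · exact h1
        · exact absurd (Finset.mem_insert_self a C)
            (fun hc => hnotmem hR' (Finset.mem_of_mem_erase h1) hc)
      have hC : C = C' := by
        have := congrArg (fun X => Finset.erase X a) hCC
        simpa [Finset.erase_insert haC, Finset.erase_insert haC'] using this
      subst hC
      have hnotin : insert a C ∉ R.erase C :=
        fun hh => hnotmem hR (Finset.mem_of_mem_erase hh) (Finset.mem_insert_self a C)
      have hnotin' : insert a C ∉ R'.erase C :=
        fun hh => hnotmem hR' (Finset.mem_of_mem_erase hh) (Finset.mem_insert_self a C)
      have hRR : R.erase C = R'.erase C := by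
        have := congrArg (fun X => Finset.erase X (insert a C)) h
        simpa [Finset.erase_insert hnotin, Finset.erase_insert hnotin'] using this
      have : R = R' := by
        rw [← Finset.insert_erase hCR, ← Finset.insert_erase hCR', hRR]
      subst this
      rfl
    · -- surjective
      intro P hP
      rw [hT2, Finset.mem_filter] at hP
      obtain ⟨hPmem, haP⟩ := hP
      obtain ⟨hcard, hem, hpd, hsup⟩ := mem_partFinset.mp hPmem
      have haB : ∃ B ∈ P, a ∈ B := by
        have : a ∈ P.sup id := by rw [hsup]; exact Finset.mem_insert_self a s
        rw [Finset.mem_sup] at this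
        exact this
      obtain ⟨B, hBP, haB⟩ := haB
      set C := B.erase a with hC
      have hBne : B ≠ {a} := fun h => haP (h ▸ hBP)
      have hCne : C ≠ ∅ := by
        intro h
        apply hBne
        apply Finset.eq_singleton_iff_unique_mem.mpr
        refine ⟨haB, fun x hx => ?_⟩
        by_contra hxa
        have hmem : x ∈ B.erase a := Finset.mem_erase.mpr ⟨hxa, hx⟩
        rw [← hC, h] at hmem
        exact Finset.notMem_empty x hmem
      have hCB : C ⊆ B := Finset.erase_subset a B
      have haC : a ∉ C := Finset.notMem_erase a B
      have hCnotin : C ∉ P.erase B := by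
        intro hh
        have hCP : C ∈ P := Finset.mem_of_mem_erase hh
        have hne : C ≠ B := fun h => haC (h ▸ haB)
        have hdisj := hpd hCP hBP hne
        obtain ⟨x, hx⟩ := Finset.nonempty_iff_ne_empty.mpr hCne
        exact (Finset.disjoint_left.mp hdisj hx) (hCB hx)
      have hano : ∀ D ∈ P.erase B, a ∉ D := by
        intro D hD haD
        have hDB : D ≠ B := Finset.ne_of_mem_erase hD
        have hdisj := hpd (Finset.mem_of_mem_erase hD) hBP hDB
        exact (Finset.disjoint_left.mp hdisj haD) haB
      refine ⟨⟨insert C (P.erase B), C⟩, ?_, ?_⟩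
      · rw [Finset.mem_sigma]
        constructor
        · apply mem_partFinset.mpr
          refine ⟨?_, ?_, ?_, ?_⟩
          · rw [Finset.card_insert_of_notMem hCnotin, Finset.card_erase_of_mem hBP, hcard]
            omega
          · simp only [Finset.mem_insert]
            push_neg
            exact ⟨fun h => hCne h.symm, fun h => hem (Finset.mem_of_mem_erase h)⟩
          · rw [Finset.coe_insert]
            apply Set.pairwiseDisjoint_insert.mpr
            refine ⟨hpd.subset (by intro x hx; exact Finset.mem_of_mem_erase hx), ?_⟩
            intro D hD hne
            simp only [Finset.mem_coe] at hD
            have hDB : D ≠ B := Finset.ne_of_mem_erase hD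
            have hdisj := hpd hBP (Finset.mem_of_mem_erase hD) (Ne.symm hDB)
            simp only [id] at hdisj ⊢
            exact hdisj.mono_left hCB
          · have h1 : P.sup id = B ⊔ (P.erase B).sup id := by
              conv_lhs => rw [← Finset.insert_erase hBP]
              rw [Finset.sup_insert]
              rfl
            rw [Finset.sup_insert]
            simp only [id] at h1 ⊢
            apply Finset.Subset.antisymm
            · intro x hx
              rw [Finset.sup_eq_union, Finset.mem_union] at hx
              have hxa : x ≠ a := by
                intro h
                subst h
                rcases hx with h | h
                · exact haC h
                · rw [Finset.mem_sup] at h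
                  obtain ⟨D, hD, hxD⟩ := h
                  exact hano D hD hxD
              have : x ∈ P.sup id := by
                rw [h1, Finset.sup_eq_union, Finset.mem_union]
                rcases hx with h | h
                · exact Or.inl (hCB h)
                · exact Or.inr h
              rw [hsup] at this
              rcases Finset.mem_insert.mp this with h | h
              · exact absurd h hxa
              · exact h
            · intro x hx
              rw [Finset.sup_eq_union, Finset.mem_union]
              have hxa : x ≠ a := fun h => ha (h ▸ hx)
              have : x ∈ P.sup id := by rw [hsup]; exact Finset.mem_insert_of_mem hx
              rw [h1, Finset.sup_eq_union, Finset.mem_union] at this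
              rcases this with h | h
              · exact Or.inl (Finset.mem_erase.mpr ⟨hxa, h⟩)
              · exact Or.inr h
        · exact Finset.mem_insert_self _ _
      · simp only
        have hBC : insert a C = B := Finset.insert_erase haB
        rw [Finset.erase_insert hCnotin, hBC, Finset.insert_erase hBP]
  rw [show partCount (insert a s) (j+1) = (partFinset (insert a s) (j+1)).card from rfl,
    ← hsplit, hpart1, hpart2]


end AuxPart

def cRec : ℕ → ℕ → ℕ
  | 0, 0 => 1
  | 0, _ + 1 => 0
  | _ + 1, 0 => 0
  | n + 1, k + 1 => n * cRec n (k + 1) + cRec n k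

def sRec : ℕ → ℕ → ℕ
  | 0, 0 => 1
  | 0, _ + 1 => 0
  | _ + 1, 0 => 0
  | n + 1, k + 1 => sRec n k + (k + 1) * sRec n (k + 1)

theorem cRec_eq_zero : ∀ {n k : ℕ}, n < k → cRec n k = 0 := by
  intro n
  induction n with
  | zero => intro k hk; cases k with | zero => omega | succ k => rfl
  | succ n ih =>
    intro k hk
    cases k with
    | zero => omega
    | succ k =>
      show n * cRec n (k + 1) + cRec n k = 0
      rw [ih (by omega), ih (by omega)]
      simp

theorem sRec_eq_zero : ∀ {n k : ℕ}, n < k → sRec n k = 0 := by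
  intro n
  induction n with
  | zero => intro k hk; cases k with | zero => omega | succ k => rfl
  | succ n ih =>
    intro k hk
    cases k with
    | zero => omega
    | succ k =>
      show sRec n k + (k + 1) * sRec n (k + 1) = 0
      rw [ih (by omega), ih (by omega)]
      simp

/-- The Lah-type sum. -/
def lahSum (k j : ℕ) : ℕ := ∑ i ∈ Finset.Icc j k, cRec k i * sRec i j

theorem lahSum_zero {k : ℕ} (hk : 1 ≤ k) : lahSum k 0 = 0 := by
  unfold lahSum
  apply Finset.sum_eq_zero
  intro i hi
  rcases Nat.eq_zero_or_pos i with h | h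
  · subst h
    cases k with
    | zero => omega
    | succ k =>
      show cRec (k + 1) 0 * sRec 0 0 = 0
      rw [show cRec (k + 1) 0 = 0 from rfl, zero_mul]
  · obtain ⟨i', rfl⟩ := Nat.exists_eq_add_of_le h
    rw [show sRec (1 + i') 0 = 0 from by rw [Nat.add_comm]; rfl, mul_zero]

theorem M_eq {k j : ℕ} (hk : 1 ≤ k) (hj : 1 ≤ j) (hjk : j ≤ k) :
    (∑ i ∈ Finset.Icc j k, cRec (k - 1) (i - 1) * sRec i j) =
      j * lahSum (k - 1) j + lahSum (k - 1) (j - 1) := by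
  obtain ⟨K, rfl⟩ : ∃ K, k = K + 1 := ⟨k - 1, by omega⟩
  obtain ⟨J, rfl⟩ : ∃ J, j = J + 1 := ⟨j - 1, by omega⟩
  simp only [Nat.add_sub_cancel]
  have hre : (∑ i ∈ Finset.Icc (J + 1) (K + 1), cRec K (i - 1) * sRec i (J + 1)) =
      ∑ i ∈ Finset.Icc J K, cRec K i * sRec (i + 1) (J + 1) := by
    rw [← Finset.map_add_right_Icc, Finset.sum_map]
    simp [addRightEmbedding]
  rw [hre]
  have hstep : ∀ i, cRec K i * sRec (i + 1) (J + 1) =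
      cRec K i * sRec i J + (J + 1) * (cRec K i * sRec i (J + 1)) := by
    intro i
    show cRec K i * (sRec i J + (J + 1) * sRec i (J + 1)) = _
    ring
  rw [Finset.sum_congr rfl fun i _ => hstep i, Finset.sum_add_distrib, ← Finset.mul_sum]
  have hJK : J ≤ K := by omega
  have hsplit2 : (∑ i ∈ Finset.Icc J K, cRec K i * sRec i (J + 1)) =
      cRec K J * sRec J (J + 1) + ∑ i ∈ Finset.Icc (J + 1) K, cRec K i * sRec i (J + 1) := by
    rw [Finset.Icc_add_one_left_eq_Ioc, ← Finset.Ioc_insert_left hJK, Finset.sum_insert (by simp)]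
  rw [hsplit2, show sRec J (J + 1) = 0 from sRec_eq_zero (by omega), mul_zero, zero_add]
  unfold lahSum
  ring
theorem lahSum_succ {k j : ℕ} (hj : 1 ≤ j) (hjk : j ≤ k + 1) (hk : 1 ≤ k) :
    lahSum (k + 1) j = (k + j) * lahSum k j + lahSum k (j - 1) := by
  have h1 : lahSum (k + 1) j = k * lahSum k j +
      ∑ i ∈ Finset.Icc j (k + 1), cRec k (i - 1) * sRec i j := by
    unfold lahSum
    have hstep : ∀ i ∈ Finset.Icc j (k + 1), cRec (k + 1) i * sRec i j =
        k * (cRec k i * sRec i j) + cRec k (i - 1) * sRec i j := by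
      intro i hi
      rw [Finset.mem_Icc] at hi
      obtain ⟨i', rfl⟩ : ∃ i', i = i' + 1 := ⟨i - 1, by omega⟩
      show (k * cRec k (i' + 1) + cRec k i') * sRec (i' + 1) j = _
      simp only [Nat.add_sub_cancel]
      ring
    rw [Finset.sum_congr rfl hstep, Finset.sum_add_distrib, ← Finset.mul_sum]
    rw [Finset.sum_Icc_succ_top hjk, show cRec k (k + 1) = 0 from cRec_eq_zero (by omega)]
    simp
  have h2 := M_eq (k := k + 1) (j := j) (by omega) hj hjk
  simp only [Nat.add_sub_cancel] at h2
  rw [h1, h2]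
  ring

theorem lahSum_one_one : lahSum 1 1 = 1 := by
  unfold lahSum
  rw [Finset.Icc_self, Finset.sum_singleton]
  rfl

theorem lahSum_eq_zero {k j : ℕ} (h : k < j) : lahSum k j = 0 := by
  unfold lahSum
  rw [Finset.Icc_eq_empty (by omega), Finset.sum_empty]

theorem lah_formula : ∀ {k : ℕ}, 1 ≤ k → ∀ {j : ℕ}, 1 ≤ j →
    lahSum k j * j.factorial = k.factorial * Nat.choose (k - 1) (j - 1) := by
  intro k hk
  induction k, hk using Nat.le_induction with
  | base =>
    intro j hj
    rcases Nat.lt_or_ge 1 j with h | h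
    · rw [lahSum_eq_zero h, Nat.choose_eq_zero_of_lt (by omega)]
      simp
    · have : j = 1 := by omega
      subst this
      rw [lahSum_one_one]
      rfl
  | succ k hk ih =>
    intro j hj
    rcases Nat.lt_or_ge (k + 1) j with h | h
    · rw [lahSum_eq_zero h, Nat.choose_eq_zero_of_lt (by omega)]
      simp
    · rw [lahSum_succ hj h hk]
      rcases Nat.lt_or_ge 1 j with h2 | h2
      · -- j ≥ 2
        obtain ⟨m, rfl⟩ : ∃ m, j = m + 2 := ⟨j - 2, by omega⟩
        obtain ⟨K, rfl⟩ : ∃ K, k = K + 1 := ⟨k - 1, by omega⟩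
        have hmK : m ≤ K := by omega
        have hL1 := ih (show 1 ≤ m + 2 by omega)
        have hL2 := ih (show 1 ≤ m + 1 by omega)
        simp only [Nat.add_sub_cancel, show m + 2 - 1 = m + 1 from rfl,
          show m + 1 - 1 = m from rfl] at hL1 hL2 ⊢
        have hpascal : Nat.choose (K + 1) (m + 1) = Nat.choose K m + Nat.choose K (m + 1) :=
          Nat.choose_succ_succ K m
        have hkey : Nat.choose K (m + 1) * (m + 1) = Nat.choose K m * (K - m) :=
          Nat.choose_succ_right_eq K m
        have hfac : (m + 2).factorial = (m + 2) * (m + 1).factorial := rfl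
        have hcoef : (K + 1 + (m + 2)) * Nat.choose K (m + 1) + (m + 2) * Nat.choose K m
            = (K + 1 + 1) * (Nat.choose K m + Nat.choose K (m + 1)) := by
          zify [hmK] at hkey ⊢
          linear_combination hkey
        calc ((K + 1 + (m + 2)) * lahSum (K + 1) (m + 2) + lahSum (K + 1) (m + 1))
              * (m + 2).factorial
            = (K + 1 + (m + 2)) * (lahSum (K + 1) (m + 2) * (m + 2).factorial)
              + (m + 2) * (lahSum (K + 1) (m + 1) * (m + 1).factorial) := by
              rw [hfac]; ring
          _ = (K + 1).factorial * ((K + 1 + (m + 2)) * Nat.choose K (m + 1)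
              + (m + 2) * Nat.choose K m) := by rw [hL1, hL2]; ring
          _ = (K + 1 + 1).factorial * (K + 1).choose (m + 1) := by
              rw [hcoef, hpascal, Nat.factorial_succ (K + 1)]; ring
      · have : j = 1 := by omega
        subst this
        simp only [Nat.sub_self]
        rw [lahSum_zero hk]
        have hL := ih (le_refl 1)
        simp only [Nat.sub_self, Nat.factorial_one, mul_one] at hL ⊢
        rw [hL, Nat.choose_zero_right, Nat.choose_zero_right, mul_one, mul_one, add_zero]
        show (k + 1) * Nat.factorial k = Nat.factorial (k + 1)
        rw [Nat.factorial_succ]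

theorem lahSum_zero_zero : lahSum 0 0 = 1 := by
  unfold lahSum
  rw [Finset.Icc_self, Finset.sum_singleton]
  rfl

theorem final_identity {j k : ℕ} (hj : 1 ≤ j) (hjk : j ≤ k) :
    j * lahSum k j = k * (∑ i ∈ Finset.Icc j k, cRec (k - 1) (i - 1) * sRec i j) := by
  rw [M_eq (by omega) hj hjk]
  rcases Nat.lt_or_ge k 2 with hk2 | hk2
  · -- k = 1, j = 1
    have hk1 : k = 1 := by omega
    have hj1 : j = 1 := by omega
    subst hk1; subst hj1
    simp only [Nat.sub_self, lahSum_one_one, lahSum_zero_zero,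
      show (1:ℕ) - 1 = 0 from rfl]
    rw [lahSum_eq_zero (show 0 < 1 by omega)]
  · obtain ⟨K, rfl⟩ : ∃ K, k = K + 2 := ⟨k - 2, by omega⟩
    apply Nat.eq_of_mul_eq_mul_right (Nat.factorial_pos (j - 1))
    obtain ⟨m, rfl⟩ : ∃ m, j = m + 1 := ⟨j - 1, by omega⟩
    simp only [Nat.add_sub_cancel]
    have hfac : (m + 1).factorial = (m + 1) * m.factorial := Nat.factorial_succ m
    have h1 : (m + 1) * lahSum (K + 2) (m + 1) * m.factorial
        = lahSum (K + 2) (m + 1) * (m + 1).factorial := by rw [hfac]; ring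
    rw [h1, lah_formula (by omega) hj]
    simp only [Nat.add_sub_cancel, show K + 2 - 1 = K + 1 from rfl]
    have h2 : (K + 2) * ((m + 1) * lahSum (K + 1) (m + 1) + lahSum (K + 1) m)
          * m.factorial
        = (K + 2) * (lahSum (K + 1) (m + 1) * (m + 1).factorial
          + lahSum (K + 1) m * m.factorial) := by
      rw [hfac]; ring
    rw [h2, lah_formula (k := K + 1) (by omega) hj]
    simp only [Nat.add_sub_cancel, show K + 1 - 1 = K from rfl]
    rcases Nat.eq_zero_or_pos m with hm | hm
    · subst hm
      rw [show lahSum (K + 1) 0 = 0 from lahSum_zero (by omega)]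
      simp [Nat.factorial_succ (K + 1)]
    · obtain ⟨m', rfl⟩ : ∃ m', m = m' + 1 := ⟨m - 1, by omega⟩
      rw [lah_formula (k := K + 1) (j := m' + 1) (by omega) (by omega)]
      simp only [Nat.add_sub_cancel]
      rw [show Nat.choose (K + 1) (m' + 1) = Nat.choose K m' + Nat.choose K (m' + 1) from
        Nat.choose_succ_succ K m', Nat.factorial_succ (K + 1)]
      ring


theorem stirlingFirst_eq_cRec : ∀ n k, stirlingFirst n k = cRec n k := by
  intro n
  induction n with
  | zero => intro k; rw [stirlingFirst_zero]; cases k <;> rfl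
  | succ n ih =>
    intro k
    cases k with
    | zero => rw [stirlingFirst_succ_zero]; rfl
    | succ k =>
      rw [stirlingFirst_succ, ih, ih]
      show _ = n * cRec n (k + 1) + cRec n k
      ring

theorem partCount_eq_sRec {α : Type*} [DecidableEq α] (s : Finset α) :
    ∀ j, partCount s j = sRec s.card j := by
  classical
  induction s using Finset.induction_on with
  | empty =>
    intro j
    rw [partCount_empty, Finset.card_empty]
    cases j <;> rfl
  | @insert a s ha ih =>
    intro j
    cases j with
    | zero =>
      rw [partCount_self_zero, if_neg (Finset.insert_ne_empty a s),
        Finset.card_insert_of_notMem ha]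
      rfl
    | succ j =>
      rw [partCount_insert ha, ih, ih, Finset.card_insert_of_notMem ha]
      rfl

theorem stirlingSecond_eq_sRec (n j : ℕ) : stirlingSecond n j = sRec n j := by
  have h : stirlingSecond n j = partCount (Finset.univ : Finset (Fin n)) j := by
    unfold stirlingSecond partCount partFinset
    rw [Finset.powerset_univ, Finset.powerset_univ]
  rw [h, partCount_eq_sRec, Finset.card_univ, Fintype.card_fin]

/-- `j ∑_{i=j}^k c(k,i) S(i,j) = k ∑_{i=j}^k c(k-1,i-1) S(i,j)`. -/
theorem stirling_mixed_identity (j k : ℕ) (hj : 1 ≤ j) (hjk : j ≤ k) :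
    j * ∑ i ∈ Finset.Icc j k, stirlingFirst k i * stirlingSecond i j =
      k * ∑ i ∈ Finset.Icc j k, stirlingFirst (k - 1) (i - 1) * stirlingSecond i j := by
  have h1 : (∑ i ∈ Finset.Icc j k, stirlingFirst k i * stirlingSecond i j) = lahSum k j :=
    Finset.sum_congr rfl fun i _ => by rw [stirlingFirst_eq_cRec, stirlingSecond_eq_sRec]
  have h2 : (∑ i ∈ Finset.Icc j k, stirlingFirst (k - 1) (i - 1) * stirlingSecond i j)
      = ∑ i ∈ Finset.Icc j k, cRec (k - 1) (i - 1) * sRec i j :=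
    Finset.sum_congr rfl fun i _ => by rw [stirlingFirst_eq_cRec, stirlingSecond_eq_sRec]
  rw [h1, h2]
  exact final_identity hj hjk
end

section
/- For integers n ≥ m ≥ 1, Σ_{k=m}^{n} c(n,k) · S(k,m) = C(n,m) · (n-1)·(n-2)···(m), i.e., the binomial coefficient n choose m times the falling factorial (n-1)^{underline{n-m}}. -/
open scoped Classical
open Polynomial

namespace StirlingAux
set_option linter.unusedSectionVars false

section Arith
open Finset Nat

def c' : ℕ → ℕ → ℕ
  | 0, 0 => 1
  | 0, _+1 => 0
  | _+1, 0 => 0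
  | n+1, k+1 => n * c' n (k+1) + c' n k

def S' : ℕ → ℕ → ℕ
  | 0, 0 => 1
  | 0, _+1 => 0
  | _+1, 0 => 0
  | n+1, m+1 => (m+1) * S' n (m+1) + S' n m

lemma c'_eq_zero : ∀ {n k}, n < k → c' n k = 0
  | 0, 0, h => absurd h (by omega)
  | 0, _+1, _ => rfl
  | _+1, 0, h => absurd h (by omega)
  | n+1, k+1, h => by
      have h1 : n < k + 1 := by omega
      have h2 : n < k := by omega
      simp [c', c'_eq_zero h1, c'_eq_zero h2]

lemma S'_eq_zero : ∀ {n m}, n < m → S' n m = 0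
  | 0, 0, h => absurd h (by omega)
  | 0, _+1, _ => rfl
  | _+1, 0, h => absurd h (by omega)
  | n+1, m+1, h => by
      have h1 : n < m + 1 := by omega
      have h2 : n < m := by omega
      simp [S', S'_eq_zero h1, S'_eq_zero h2]

lemma c'_self : ∀ n, c' n n = 1
  | 0 => rfl
  | n+1 => by simp [c', c'_self n, c'_eq_zero (by omega : n < n + 1)]

lemma S'_self : ∀ n, S' n n = 1
  | 0 => rfl
  | n+1 => by simp [S', S'_self n, S'_eq_zero (by omega : n < n + 1)]

noncomputable def A (n m : ℕ) : ℕ := ∑ k ∈ Icc m n, c' n k * S' k m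

lemma A_rec (n m' : ℕ) (hm : m' + 1 ≤ n) :
    A (n+1) (m'+1) =
      n * A n (m'+1) + ((m'+1) * A n (m'+1) + ∑ j ∈ Icc m' n, c' n j * S' j m') := by
  have step1 : A (n+1) (m'+1) = ∑ j ∈ Icc m' n, c' (n+1) (j+1) * S' (j+1) (m'+1) := by
    rw [A, ← Finset.map_add_right_Icc m' n 1, Finset.sum_map]
    rfl
  have expand : ∀ j, c' (n+1) (j+1) * S' (j+1) (m'+1)
      = n * (c' n (j+1) * S' (j+1) (m'+1)) + c' n j * S' (j+1) (m'+1) := by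
    intro j; show (n * c' n (j+1) + c' n j) * _ = _; ring
  rw [step1]
  simp_rw [expand]
  rw [Finset.sum_add_distrib, ← Finset.mul_sum]
  have sum1 : ∑ j ∈ Icc m' n, c' n (j+1) * S' (j+1) (m'+1) = A n (m'+1) := by
    have : ∑ j ∈ Icc m' n, c' n (j+1) * S' (j+1) (m'+1)
        = ∑ k ∈ Icc (m'+1) (n+1), c' n k * S' k (m'+1) := by
      rw [← Finset.map_add_right_Icc m' n 1, Finset.sum_map]; rfl
    rw [this, Finset.sum_Icc_succ_top (by omega), c'_eq_zero (by omega), A]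
    simp
  have expand2 : ∀ j, c' n j * S' (j+1) (m'+1)
      = (m'+1) * (c' n j * S' j (m'+1)) + c' n j * S' j m' := by
    intro j; show c' n j * ((m'+1) * S' j (m'+1) + S' j m') = _; ring
  rw [sum1]
  congr 1
  rw [Finset.sum_congr rfl (fun j _ => expand2 j), Finset.sum_add_distrib, ← Finset.mul_sum]
  congr 2
  rw [Finset.Icc_eq_cons_Ioc (by omega : m' ≤ n), Finset.sum_cons, ← Finset.Icc_add_one_left_eq_Ioc,
    S'_eq_zero (by omega : m' < m' + 1)]
  simp [A]

lemma arith (a t : ℕ) :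
    (a+t+3).choose (a+2) * (a+t+2).descFactorial (t+1)
      = (2*a+t+4) * ((a+t+2).choose (a+2) * (a+t+1).descFactorial t)
        + (a+t+2).choose (a+1) * (a+t+1).descFactorial (t+1) := by
  have e1 := Nat.choose_mul_factorial_mul_factorial (show a+2 ≤ a+t+3 by omega)
  rw [show a+t+3 - (a+2) = t+1 by omega] at e1
  have e2 := Nat.factorial_mul_descFactorial (show t+1 ≤ a+t+2 by omega)
  rw [show a+t+2 - (t+1) = a+1 by omega] at e2
  have e3 := Nat.choose_mul_factorial_mul_factorial (show a+2 ≤ a+t+2 by omega)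
  rw [show a+t+2 - (a+2) = t by omega] at e3
  have e4 := Nat.factorial_mul_descFactorial (show t ≤ a+t+1 by omega)
  rw [show a+t+1 - t = a+1 by omega] at e4
  have e5 := Nat.choose_mul_factorial_mul_factorial (show a+1 ≤ a+t+2 by omega)
  rw [show a+t+2 - (a+1) = t+1 by omega] at e5
  have e6 := Nat.factorial_mul_descFactorial (show t+1 ≤ a+t+1 by omega)
  rw [show a+t+1 - (t+1) = a by omega] at e6
  have f1 : (a+t+3)! = (a+t+3) * (a+t+2)! := by
    rw [show a+t+3 = (a+t+2)+1 by ring]; exact Nat.factorial_succ _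
  have f2 : (a+t+2)! = (a+t+2) * (a+t+1)! := by
    rw [show a+t+2 = (a+t+1)+1 by ring]; exact Nat.factorial_succ _
  have f3 : (a+2)! = (a+2) * (a+1)! := by
    rw [show a+2 = (a+1)+1 by ring]; exact Nat.factorial_succ _
  have f4 : (a+1)! = (a+1) * a ! := Nat.factorial_succ _
  have f5 : (t+1)! = (t+1) * t ! := Nat.factorial_succ _
  -- move to ℚ
  have q1 : ((a+t+3).choose (a+2) : ℚ) * (a+2)! * (t+1)! = (a+t+3)! := by exact_mod_cast e1
  have q2 : ((a+1)! : ℚ) * (a+t+2).descFactorial (t+1) = (a+t+2)! := by exact_mod_cast e2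
  have q3 : ((a+t+2).choose (a+2) : ℚ) * (a+2)! * t ! = (a+t+2)! := by exact_mod_cast e3
  have q4 : ((a+1)! : ℚ) * (a+t+1).descFactorial t = (a+t+1)! := by exact_mod_cast e4
  have q5 : ((a+t+2).choose (a+1) : ℚ) * (a+1)! * (t+1)! = (a+t+2)! := by exact_mod_cast e5
  have q6 : (a ! : ℚ) * (a+t+1).descFactorial (t+1) = (a+t+1)! := by exact_mod_cast e6
  have hfa : (a ! : ℚ) ≠ 0 := by exact_mod_cast (Nat.factorial_pos a).ne'
  have hft : (t ! : ℚ) ≠ 0 := by exact_mod_cast (Nat.factorial_pos t).ne'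
  have hfx : ((a+t+1)! : ℚ) ≠ 0 := by exact_mod_cast (Nat.factorial_pos _).ne'
  have hfa1 : ((a+1)! : ℚ) ≠ 0 := by exact_mod_cast (Nat.factorial_pos _).ne'
  have hfa2 : ((a+2)! : ℚ) ≠ 0 := by exact_mod_cast (Nat.factorial_pos _).ne'
  have hft1 : ((t+1)! : ℚ) ≠ 0 := by exact_mod_cast (Nat.factorial_pos _).ne'
  have hC1 : ((a+t+3).choose (a+2) : ℚ) = (a+t+3)! / ((a+2)! * (t+1)!) := by
    rw [eq_div_iff (by exact mul_ne_zero hfa2 hft1)]; linear_combination q1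
  have hD1 : ((a+t+2).descFactorial (t+1) : ℚ) = (a+t+2)! / (a+1)! := by
    rw [eq_div_iff hfa1]; linear_combination q2
  have hC2 : ((a+t+2).choose (a+2) : ℚ) = (a+t+2)! / ((a+2)! * t !) := by
    rw [eq_div_iff (by exact mul_ne_zero hfa2 hft)]; linear_combination q3
  have hD2 : ((a+t+1).descFactorial t : ℚ) = (a+t+1)! / (a+1)! := by
    rw [eq_div_iff hfa1]; linear_combination q4
  have hC3 : ((a+t+2).choose (a+1) : ℚ) = (a+t+2)! / ((a+1)! * (t+1)!) := by
    rw [eq_div_iff (by exact mul_ne_zero hfa1 hft1)]; linear_combination q5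
  have hD3 : ((a+t+1).descFactorial (t+1) : ℚ) = (a+t+1)! / a ! := by
    rw [eq_div_iff hfa]; linear_combination q6
  have g1 : ((a+t+3)! : ℚ) = (a+t+3) * (a+t+2)! := by exact_mod_cast f1
  have g2 : ((a+t+2)! : ℚ) = (a+t+2) * (a+t+1)! := by exact_mod_cast f2
  have g3 : ((a+2)! : ℚ) = (a+2) * (a+1)! := by exact_mod_cast f3
  have g4 : ((a+1)! : ℚ) = (a+1) * a ! := by exact_mod_cast f4
  have g5 : ((t+1)! : ℚ) = (t+1) * t ! := by exact_mod_cast f5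
  have key : ((a+t+3).choose (a+2) * (a+t+2).descFactorial (t+1) : ℚ)
      = (2*a+t+4) * ((a+t+2).choose (a+2) * (a+t+1).descFactorial t)
        + (a+t+2).choose (a+1) * (a+t+1).descFactorial (t+1) := by
    rw [hC1, hD1, hC2, hD2, hC3, hD3, g1, g2, g3, g4, g5]
    field_simp
    ring
  exact_mod_cast key


lemma A_one (n : ℕ) (hn : 1 ≤ n) :
    A (n+1) 1 = (n+1) * A n 1 := by
  have := A_rec n 0 (by omega)
  rw [this]
  have hz : ∑ j ∈ Icc 0 n, c' n j * S' j 0 = 0 := by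
    apply Finset.sum_eq_zero
    intro j _
    match j with
    | 0 =>
      match n, hn with
      | n+1, _ => rfl
    | j+1 => simp [S']
  rw [hz]; ring

lemma A_eq : ∀ n, ∀ m, 1 ≤ m → m ≤ n →
    A n m = n.choose m * (n-1).descFactorial (n - m) := by
  intro n
  induction n with
  | zero => intro m h1 h2; omega
  | succ n ih =>
    intro m h1 h2
    rcases Nat.lt_or_ge n m with hlt | hle
    · -- m = n+1
      have hm : m = n + 1 := by omega
      subst hm
      rw [A, Finset.Icc_self, Finset.sum_singleton, c'_self, S'_self,
        Nat.choose_self, Nat.sub_self]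
      simp
    · -- m ≤ n
      obtain ⟨m', rfl⟩ : ∃ m', m = m' + 1 := ⟨m - 1, by omega⟩
      rcases Nat.eq_zero_or_pos m' with hm0 | hm1
      · subst hm0
        have hn1 : 1 ≤ n := by omega
        rw [A_one n hn1, ih 1 le_rfl hn1]
        rw [Nat.choose_one_right, Nat.choose_one_right]
        rw [show n + 1 - 1 = n by omega]
        obtain ⟨n', rfl⟩ : ∃ n', n = n' + 1 := ⟨n - 1, by omega⟩
        rw [show n' + 1 - 1 = n' by omega, Nat.succ_descFactorial_succ]
      · -- m' ≥ 1
        obtain ⟨a, rfl⟩ : ∃ a, m' = a + 1 := ⟨m' - 1, by omega⟩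
        obtain ⟨t, rfl⟩ : ∃ t, n = a + t + 2 := ⟨n - a - 2, by omega⟩
        have e1 : A (a+t+2) (a+1+1) = (a+t+2).choose (a+2) * (a+t+1).descFactorial t := by
          rw [ih (a+1+1) (by omega) (by omega),
            show a+t+2-1 = a+t+1 by omega, show a+t+2-(a+1+1) = t by omega]
        have e2 : (∑ j ∈ Icc (a+1) (a+t+2), c' (a+t+2) j * S' j (a+1))
            = (a+t+2).choose (a+1) * (a+t+1).descFactorial (t+1) := by
          have := ih (a+1) (by omega) (by omega)
          rw [A] at this
          rw [this, show a+t+2-1 = a+t+1 by omega, show a+t+2-(a+1) = t+1 by omega]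
        rw [A_rec (a+t+2) (a+1) (by omega), e1, e2,
          show a+t+2+1 = a+t+3 by ring, show a+1+1 = a+2 by ring,
          show a+t+3-1 = a+t+2 by omega, show a+t+3-(a+2) = t+1 by omega,
          arith a t]
        ring


end Arith

section Perm
open Equiv Equiv.Perm Finset

variable {α : Type*} [Fintype α] [DecidableEq α]

lemma support_swap_mul_of_cycle {c : Perm α} {x p : α}
    (hx : x ∉ c.support) (hp : p ∈ c.support) :
    (Equiv.swap x p * c).support = insert x c.support := by
  have hxp : x ≠ p := fun h => hx (h ▸ hp)
  have hcx : c x = x := Equiv.Perm.notMem_support.mp hx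
  ext y
  simp only [Equiv.Perm.mem_support, Equiv.Perm.mul_apply, Finset.mem_insert]
  by_cases hy : y = x
  · subst hy
    simp only [hcx, Equiv.swap_apply_left]
    tauto
  · by_cases hyc : c y = y
    · have hyp : y ≠ p := by
        intro h; subst h; exact (Equiv.Perm.mem_support.mp hp) hyc
      rw [hyc, Equiv.swap_apply_of_ne_of_ne hy hyp]
      tauto
    · have hyc' : y ∈ c.support := Equiv.Perm.mem_support.mpr hyc
      have h1 : c y ≠ x := fun h => hx (h ▸ Equiv.Perm.apply_mem_support.mpr hyc')
      by_cases h2 : c y = p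
      · rw [h2, Equiv.swap_apply_right]
        have hxy : x ≠ y := fun h => hy h.symm
        have hpy : p ≠ y := fun h => hyc (h ▸ h2)
        exact ⟨fun _ => Or.inr hpy, fun _ => hxy⟩
      · rw [Equiv.swap_apply_of_ne_of_ne h1 h2]
        tauto

lemma isCycle_swap_mul_of_cycle {c : Perm α} {x p : α} (hc : c.IsCycle)
    (hx : x ∉ c.support) (hp : p ∈ c.support) :
    (Equiv.swap x p * c).IsCycle := by
  have hxp : x ≠ p := fun h => hx (h ▸ hp)
  have hcx : c x = x := Equiv.Perm.notMem_support.mp hx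
  have hgx : (Equiv.swap x p * c) x = p := by
    rw [Equiv.Perm.mul_apply, hcx, Equiv.swap_apply_left]
  have key : ∀ i : ℕ, (Equiv.swap x p * c).SameCycle x ((c ^ i) p) := by
    intro i
    induction i with
    | zero => exact ⟨1, by simpa using hgx⟩
    | succ i ih =>
      have hz : (c ^ i) p ∈ c.support := Equiv.Perm.pow_apply_mem_support.mpr hp
      by_cases h : c ((c ^ i) p) = p
      · have e : (c ^ (i+1)) p = p := by rw [pow_succ', Equiv.Perm.mul_apply, h]
        rw [e]; exact ⟨1, by simpa using hgx⟩
      · have hcz : c ((c ^ i) p) ≠ x := fun hcontra =>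
          hx (hcontra ▸ Equiv.Perm.apply_mem_support.mpr hz)
        have step : (Equiv.swap x p * c) ((c ^ i) p) = (c ^ (i+1)) p := by
          rw [pow_succ', Equiv.Perm.mul_apply, Equiv.Perm.mul_apply,
            Equiv.swap_apply_of_ne_of_ne hcz h]
        exact ih.trans ⟨1, by simpa using step⟩
  refine ⟨x, by rw [hgx]; exact Ne.symm hxp, fun y hy => ?_⟩
  by_cases hyx : y = x
  · subst hyx; exact ⟨0, by simp⟩
  · have hyc : y ∈ c.support := by
      have hy' : y ∈ (Equiv.swap x p * c).support := Equiv.Perm.mem_support.mpr hy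
      rw [support_swap_mul_of_cycle hx hp, Finset.mem_insert] at hy'
      rcases hy' with h | h
      · exact absurd h hyx
      · exact h
    obtain ⟨i, hi⟩ := hc.exists_pow_eq (Equiv.Perm.mem_support.mp hp)
      (Equiv.Perm.mem_support.mp hyc)
    exact hi ▸ key i


noncomputable def ccount (σ : Perm α) : ℕ :=
  Multiset.card σ.cycleType + (Fintype.card α - σ.support.card)

lemma ccount_swap_mul (σ : Perm α) (x p : α) (hx : σ x = x) (hpx : p ≠ x) :
    ccount (Equiv.swap x p * σ) + 1 = ccount σ := by
  have hxs : x ∉ σ.support := Equiv.Perm.notMem_support.mpr hx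
  by_cases hp : p ∈ σ.support
  · -- p in a cycle of σ
    have hpc : σ p ≠ p := Equiv.Perm.mem_support.mp hp
    set c := σ.cycleOf p with hc
    have hcIs : c.IsCycle := Equiv.Perm.isCycle_cycleOf σ hpc
    set τ := c⁻¹ * σ with hτ
    have hστ : σ = c * τ := (mul_inv_cancel_left c σ).symm
    have hd : c.Disjoint τ := by
      intro a
      by_cases hsc : σ.SameCycle p a
      · right
        show (c⁻¹ * σ) a = a
        have hca : c a = σ a := by rw [hc, Equiv.Perm.cycleOf_apply, if_pos hsc]
        rw [Equiv.Perm.mul_apply, ← hca, Equiv.Perm.inv_def, Equiv.symm_apply_apply]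
      · left
        rw [hc, Equiv.Perm.cycleOf_apply, if_neg hsc]
    have hsup : σ.support = c.support ∪ τ.support := by
      conv_lhs => rw [hστ]
      exact hd.support_mul
    have hsupd : _root_.Disjoint c.support τ.support := hd.disjoint_support
    have hxc : x ∉ c.support := fun h => hxs (Equiv.Perm.support_cycleOf_le σ p h)
    have hpc' : p ∈ c.support :=
      Equiv.Perm.mem_support_cycleOf_iff.mpr ⟨Equiv.Perm.SameCycle.refl _ _, hp⟩
    have hg : Equiv.swap x p * σ = (Equiv.swap x p * c) * τ := by rw [hστ, mul_assoc]
    have hIs2 : (Equiv.swap x p * c).IsCycle := isCycle_swap_mul_of_cycle hcIs hxc hpc'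
    have hsup2 : (Equiv.swap x p * c).support = insert x c.support :=
      support_swap_mul_of_cycle hxc hpc'
    have hxt : x ∉ τ.support := fun h => hxs (hsup ▸ Finset.mem_union_right _ h)
    have hd2 : (Equiv.swap x p * c).Disjoint τ := by
      rw [Equiv.Perm.disjoint_iff_disjoint_support, hsup2, Finset.disjoint_insert_left]
      exact ⟨hxt, hsupd⟩
    have hcard1 : Multiset.card c.cycleType = 1 := by rw [hcIs.cycleType]; rfl
    have hcard2 : Multiset.card (Equiv.swap x p * c).cycleType = 1 := by
      rw [hIs2.cycleType]; rfl
    have hA : Multiset.card σ.cycleType = 1 + Multiset.card τ.cycleType := by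
      conv_lhs => rw [hστ]
      rw [hd.cycleType_mul, Multiset.card_add, hcard1]
    have hB : Multiset.card (Equiv.swap x p * σ).cycleType
        = 1 + Multiset.card τ.cycleType := by
      rw [hg, hd2.cycleType_mul, Multiset.card_add, hcard2]
    have hsA : σ.support.card = c.support.card + τ.support.card := by
      conv_lhs => rw [hστ]
      exact hd.card_support_mul
    have hsB : (Equiv.swap x p * σ).support.card
        = (c.support.card + 1) + τ.support.card := by
      rw [hg, hd2.card_support_mul, hsup2, Finset.card_insert_of_notMem hxc]
    have hle : (Equiv.swap x p * σ).support.card ≤ Fintype.card α := Finset.card_le_univ _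
    unfold ccount
    omega
  · -- p is also a fixed point
    have hd : (Equiv.swap x p).Disjoint σ := by
      rw [Equiv.Perm.disjoint_iff_disjoint_support, Equiv.Perm.support_swap (Ne.symm hpx)]
      rw [Finset.disjoint_left]
      intro a ha
      rcases Finset.mem_insert.mp ha with h | h
      · subst h; exact hxs
      · have : a = p := Finset.mem_singleton.mp h
        subst this; exact hp
    have hIs : (Equiv.swap x p).IsCycle := Equiv.Perm.isCycle_swap (Ne.symm hpx)
    have hcard1 : Multiset.card (Equiv.swap x p).cycleType = 1 := by
      rw [hIs.cycleType]; rfl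
    have hB : Multiset.card (Equiv.swap x p * σ).cycleType
        = 1 + Multiset.card σ.cycleType := by
      rw [hd.cycleType_mul, Multiset.card_add, hcard1]
    have hsB : (Equiv.swap x p * σ).support.card = 2 + σ.support.card := by
      rw [hd.card_support_mul, Equiv.Perm.card_support_swap (Ne.symm hpx)]
    have hle : (Equiv.swap x p * σ).support.card ≤ Fintype.card α := Finset.card_le_univ _
    unfold ccount
    omega


/-- `Fin n` is equivalent to the nonzero elements of `Fin (n+1)`. -/
def finNeZeroEquiv (n : ℕ) : Fin n ≃ {x : Fin (n+1) // x ≠ 0} where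
  toFun x := ⟨x.succ, Fin.succ_ne_zero x⟩
  invFun y := (y : Fin (n+1)).pred y.2
  left_inv x := by simp
  right_inv y := by simp

lemma decomposeFin_symm_zero_eq {n : ℕ} (e : Perm (Fin n)) :
    Equiv.Perm.decomposeFin.symm (0, e) = e.extendDomain (finNeZeroEquiv n) := by
  ext y
  refine Fin.cases ?_ ?_ y
  · rw [Equiv.Perm.decomposeFin_symm_apply_zero,
      Equiv.Perm.extendDomain_apply_not_subtype _ _ (by simp)]
  · intro i
    rw [Equiv.Perm.decomposeFin_symm_apply_succ]
    have h2 : (e.extendDomain (finNeZeroEquiv n)) i.succ = (e i).succ := by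
      have h3 := Equiv.Perm.extendDomain_apply_image (e := e) (f := finNeZeroEquiv n) i
      simpa [finNeZeroEquiv] using h3
    rw [h2]
    simp

lemma ccount_decomposeFin_zero {n : ℕ} (e : Perm (Fin n)) :
    ccount (Equiv.Perm.decomposeFin.symm (0, e)) = ccount e + 1 := by
  rw [decomposeFin_symm_zero_eq]
  have h1 : (e.extendDomain (finNeZeroEquiv n)).cycleType = e.cycleType :=
    Equiv.Perm.cycleType_extendDomain _
  have h2 : (e.extendDomain (finNeZeroEquiv n)).support.card = e.support.card :=
    Equiv.Perm.card_support_extend_domain _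
  have h3 : e.support.card ≤ n := by
    have := Finset.card_le_univ e.support
    simpa [Fintype.card_fin] using this
  rw [ccount, ccount, h1, h2, Fintype.card_fin, Fintype.card_fin]
  omega

lemma decomposeFin_symm_eq_swap_mul {n : ℕ} (p : Fin (n+1)) (e : Perm (Fin n)) :
    Equiv.Perm.decomposeFin.symm (p, e)
      = Equiv.swap 0 p * Equiv.Perm.decomposeFin.symm (0, e) := by
  ext y
  refine Fin.cases ?_ ?_ y
  · rw [Equiv.Perm.decomposeFin_symm_apply_zero, Equiv.Perm.mul_apply,
      Equiv.Perm.decomposeFin_symm_apply_zero, Equiv.swap_apply_left]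
  · intro i
    rw [Equiv.Perm.decomposeFin_symm_apply_succ, Equiv.Perm.mul_apply,
      Equiv.Perm.decomposeFin_symm_apply_succ]
    simp

lemma ccount_decomposeFin_ne_zero {n : ℕ} (p : Fin (n+1)) (e : Perm (Fin n)) (hp : p ≠ 0) :
    ccount (Equiv.Perm.decomposeFin.symm (p, e)) = ccount e + 1 - 1 := by
  have h0 : (Equiv.Perm.decomposeFin.symm (0, e)) 0 = 0 :=
    Equiv.Perm.decomposeFin_symm_apply_zero 0 e
  have := ccount_swap_mul (Equiv.Perm.decomposeFin.symm (0, e)) 0 p h0 hp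
  rw [← decomposeFin_symm_eq_swap_mul] at this
  rw [ccount_decomposeFin_zero] at this
  omega

/-- local copy of `stirlingFirst` -/
noncomputable def sf (n k : ℕ) : ℕ :=
  (Finset.univ.filter fun σ : Equiv.Perm (Fin n) =>
    Multiset.card σ.cycleType + (n - σ.support.card) = k).card

lemma sf_eq_ccount (n k : ℕ) :
    sf n k = (Finset.univ.filter fun σ : Equiv.Perm (Fin n) => ccount σ = k).card := by
  rw [sf]
  congr 1
  apply Finset.filter_congr
  intro σ _
  rw [ccount, Fintype.card_fin]

lemma sf_succ (n k : ℕ) : sf (n+1) (k+1) = n * sf n (k+1) + sf n k := by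
  rw [sf_eq_ccount]
  rw [Finset.univ_perm_fin_succ (n := n), Finset.filter_map, Finset.card_map]
  rw [Finset.card_eq_sum_card_fiberwise
    (f := Prod.fst) (t := Finset.univ) (fun z _ => Finset.mem_univ _)]
  have h2 : ∀ p : Fin (n+1),
      ((Finset.univ.filter fun z : Fin (n+1) × Perm (Fin n) =>
          ccount (Equiv.Perm.decomposeFin.symm.toEmbedding z) = k+1).filter
        fun z => z.1 = p).card
      = (Finset.univ.filter fun e : Perm (Fin n) =>
          ccount (Equiv.Perm.decomposeFin.symm (p, e)) = k+1).card := by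
    intro p
    apply Finset.card_nbij' (i := fun z => z.2) (j := fun e => (p, e))
    · intro z hz
      simp only [Finset.mem_coe, Finset.mem_filter, Finset.mem_univ, true_and] at hz ⊢
      obtain ⟨h1, h2⟩ := hz
      rw [← h2]
      exact h1
    · intro e he
      simp only [Finset.mem_coe, Finset.mem_filter, Finset.mem_univ, true_and] at he ⊢
      simp only [Equiv.coe_toEmbedding]
      exact ⟨he, trivial⟩
    · intro z hz
      simp only [Finset.mem_coe, Finset.mem_filter] at hz
      exact Prod.ext hz.2.symm rfl
    · intro e _
      rfl
  simp only [Function.comp_def]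
  rw [Finset.sum_congr rfl (fun p _ => h2 p)]
  rw [Fin.sum_univ_succ]
  have hzero : (Finset.univ.filter fun e : Perm (Fin n) =>
      ccount (Equiv.Perm.decomposeFin.symm ((0 : Fin (n+1)), e)) = k+1).card = sf n k := by
    rw [sf_eq_ccount]
    congr 1
    apply Finset.filter_congr
    intro e _
    rw [ccount_decomposeFin_zero]
    simp
  have hsucc : ∀ i : Fin n, (Finset.univ.filter fun e : Perm (Fin n) =>
      ccount (Equiv.Perm.decomposeFin.symm ((i.succ : Fin (n+1)), e)) = k+1).card
        = sf n (k+1) := by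
    intro i
    rw [sf_eq_ccount]
    congr 1
    apply Finset.filter_congr
    intro e _
    rw [ccount_decomposeFin_ne_zero _ _ (Fin.succ_ne_zero i)]
    simp
  rw [hzero, Finset.sum_congr rfl (fun i _ => hsucc i), Finset.sum_const,
    Finset.card_univ, Fintype.card_fin, smul_eq_mul]
  ring

lemma sf_zero_zero : sf 0 0 = 1 := by
  rw [sf_eq_ccount]
  rw [Finset.card_eq_one]
  refine ⟨1, ?_⟩
  ext σ
  have hσ : σ = 1 := Subsingleton.elim σ 1
  subst hσ
  simp [ccount, Equiv.Perm.cycleType_one]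

lemma sf_zero_succ (k : ℕ) : sf 0 (k+1) = 0 := by
  rw [sf_eq_ccount, Finset.card_eq_zero]
  rw [Finset.filter_eq_empty_iff]
  intro σ _
  have hσ : σ = 1 := Subsingleton.elim σ 1
  subst hσ
  simp [ccount, Equiv.Perm.cycleType_one]

lemma sf_succ_zero (n : ℕ) : sf (n+1) 0 = 0 := by
  rw [sf_eq_ccount, Finset.card_eq_zero, Finset.filter_eq_empty_iff]
  intro σ _
  rw [ccount]
  intro h
  have h1 : Multiset.card σ.cycleType = 0 := by omega
  have h2 : σ = 1 := Equiv.Perm.card_cycleType_eq_zero.mp h1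
  subst h2
  rw [Equiv.Perm.support_one] at h
  simp [Fintype.card_fin] at h


lemma sf_eq_c' : ∀ n k, sf n k = c' n k
  | 0, 0 => by rw [sf_zero_zero]; rfl
  | 0, k+1 => by rw [sf_zero_succ]; rfl
  | n+1, 0 => by rw [sf_succ_zero]; rfl
  | n+1, k+1 => by rw [sf_succ, sf_eq_c' n (k+1), sf_eq_c' n k]; rfl

end Perm

section Part
open Finset

variable {α : Type*} [Fintype α] [DecidableEq α]

/-- partitions of `A` into `m` nonempty blocks -/
noncomputable def pc (A : Finset α) (m : ℕ) : ℕ :=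
  (Finset.univ.filter fun P : Finset (Finset α) =>
    P.card = m ∧ ∅ ∉ P ∧ (P : Set (Finset α)).PairwiseDisjoint id ∧
      P.sup id = A).card

lemma block_subset {A : Finset α} {P : Finset (Finset α)} (hsup : P.sup id = A)
    {B : Finset α} (hB : B ∈ P) : B ⊆ A := by
  have : (id B : Finset α) ≤ P.sup id := Finset.le_sup hB
  rwa [hsup] at this

lemma unique_block {P : Finset (Finset α)}
    (hpd : (P : Set (Finset α)).PairwiseDisjoint id)
    {x : α} {B C : Finset α} (hB : B ∈ P) (hC : C ∈ P) (hxB : x ∈ B) (hxC : x ∈ C) :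
    C = B := by
  by_contra hne
  have hd : _root_.Disjoint (id C) (id B) := hpd hC hB hne
  exact (Finset.disjoint_left.mp hd hxC) hxB

lemma pc_empty (m : ℕ) : pc (∅ : Finset α) m = if m = 0 then 1 else 0 := by
  unfold pc
  split_ifs with h
  · subst h
    rw [Finset.card_eq_one]
    refine ⟨∅, ?_⟩
    ext P
    simp only [Finset.mem_filter, Finset.mem_univ, true_and, Finset.mem_singleton]
    constructor
    · rintro ⟨hcard, -, -, -⟩
      exact Finset.card_eq_zero.mp hcard
    · rintro rfl
      simp
  · rw [Finset.card_eq_zero, Finset.filter_eq_empty_iff]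
    rintro P - ⟨hcard, hne, hpd, hsup⟩
    apply h
    rw [← hcard, Finset.card_eq_zero]
    by_contra hP
    obtain ⟨B, hB⟩ := Finset.nonempty_iff_ne_empty.mpr hP
    have hBsub : B ⊆ ∅ := block_subset hsup hB
    have : B = ∅ := Finset.subset_empty.mp hBsub
    exact hne (this ▸ hB)

lemma pc_insert_zero {A : Finset α} {a : α} : pc (insert a A) 0 = 0 := by
  unfold pc
  rw [Finset.card_eq_zero, Finset.filter_eq_empty_iff]
  rintro P - ⟨hcard, -, -, hsup⟩
  have hP : P = ∅ := Finset.card_eq_zero.mp hcard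
  subst hP
  simp only [Finset.sup_empty] at hsup
  have : a ∈ (⊥ : Finset α) := hsup ▸ Finset.mem_insert_self a A
  simp at this


lemma pc_claim1 {A : Finset α} {a : α} (ha : a ∉ A) (m : ℕ) :
    ((Finset.univ.filter fun P : Finset (Finset α) =>
        (P.card = m + 1 ∧ ∅ ∉ P ∧ (P : Set (Finset α)).PairwiseDisjoint id ∧
          P.sup id = insert a A) ∧ {a} ∈ P).card) = pc A m := by
  unfold pc
  apply Finset.card_nbij' (i := fun P => P.erase {a}) (j := fun Q => insert {a} Q)
  · -- forward membership
    intro P hP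
    simp only [Finset.mem_coe, Finset.mem_filter, Finset.mem_univ, true_and] at hP ⊢
    obtain ⟨⟨hcard, hne, hpd, hsup⟩, hmem⟩ := hP
    have hanotin : ∀ B ∈ P.erase {a}, a ∉ B := by
      intro B hB haB
      obtain ⟨hBne, hBP⟩ := Finset.mem_erase.mp hB
      exact hBne (unique_block hpd hmem hBP (Finset.mem_singleton_self a) haB)
    refine ⟨?_, ?_, ?_, ?_⟩
    · rw [Finset.card_erase_of_mem hmem, hcard]
      omega
    · intro h
      exact hne (Finset.mem_of_mem_erase h)
    · exact hpd.subset (Finset.coe_subset.mpr (Finset.erase_subset _ _))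
    · ext x
      rw [Finset.mem_sup]
      constructor
      · rintro ⟨B, hB, hxB⟩
        have hBP : B ∈ P := Finset.mem_of_mem_erase hB
        have hBsub : B ⊆ insert a A := block_subset hsup hBP
        have hxa : x ≠ a := fun h => hanotin B hB (h ▸ hxB)
        rcases Finset.mem_insert.mp (hBsub hxB) with h | h
        · exact absurd h hxa
        · exact h
      · intro hx
        have hx' : x ∈ P.sup id := by
          rw [hsup]; exact Finset.mem_insert_of_mem hx
        obtain ⟨B, hBP, hxB⟩ := Finset.mem_sup.mp hx'
        refine ⟨B, ?_, hxB⟩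
        rw [Finset.mem_erase]
        refine ⟨?_, hBP⟩
        rintro rfl
        have hxa : x = a := by simpa using hxB
        exact ha (hxa ▸ hx)
  · -- backward membership
    intro Q hQ
    simp only [Finset.mem_coe, Finset.mem_filter, Finset.mem_univ, true_and] at hQ ⊢
    obtain ⟨hcard, hne, hpd, hsup⟩ := hQ
    have haQ : {a} ∉ Q := by
      intro h
      exact ha (hsup ▸ Finset.mem_sup.mpr ⟨{a}, h, Finset.mem_singleton_self a⟩)
    have hblock : ∀ B ∈ Q, a ∉ B := fun B hB haB => ha (block_subset hsup hB haB)
    refine ⟨⟨?_, ?_, ?_, ?_⟩, Finset.mem_insert_self _ _⟩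
    · rw [Finset.card_insert_of_notMem haQ, hcard]
    · intro h
      rcases Finset.mem_insert.mp h with h | h
      · exact (Finset.singleton_ne_empty a) h.symm
      · exact hne h
    · rw [Finset.coe_insert]
      apply hpd.insert
      intro B hB _
      exact Finset.disjoint_singleton_left.mpr (hblock B hB)
    · rw [Finset.sup_insert, hsup]
      rw [Finset.insert_eq]
      rfl
  · intro P hP
    simp only [Finset.mem_coe, Finset.mem_filter] at hP
    exact Finset.insert_erase hP.2.2
  · intro Q hQ
    simp only [Finset.mem_coe, Finset.mem_filter, Finset.mem_univ, true_and] at hQ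
    apply Finset.erase_insert
    intro h
    exact ha (hQ.2.2.2 ▸ Finset.mem_sup.mpr ⟨{a}, h, Finset.mem_singleton_self a⟩)


lemma B0_spec {A : Finset α} {a : α} {P : Finset (Finset α)}
    (hpd : (P : Set (Finset α)).PairwiseDisjoint id)
    (hsup : P.sup id = insert a A) :
    (P.filter fun B => a ∈ B).sup id ∈ P ∧ a ∈ (P.filter fun B => a ∈ B).sup id
      ∧ ∀ C ∈ P, a ∈ C → C = (P.filter fun B => a ∈ B).sup id := by
  obtain ⟨B, hBP, haB⟩ := Finset.mem_sup.mp (hsup ▸ Finset.mem_insert_self a A)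
  have hfilter : P.filter (fun B => a ∈ B) = {B} := by
    ext C
    simp only [Finset.mem_filter, Finset.mem_singleton]
    constructor
    · rintro ⟨hCP, haC⟩
      exact unique_block hpd hBP hCP haB haC
    · rintro rfl
      exact ⟨hBP, haB⟩
  rw [hfilter, Finset.sup_singleton]
  exact ⟨hBP, haB, fun C hC haC => unique_block hpd hBP hC haB haC⟩

lemma pc_claim2 {A : Finset α} {a : α} (ha : a ∉ A) (m : ℕ) :
    ((Finset.univ.filter fun P : Finset (Finset α) =>
        (P.card = m + 1 ∧ ∅ ∉ P ∧ (P : Set (Finset α)).PairwiseDisjoint id ∧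
          P.sup id = insert a A) ∧ ¬ {a} ∈ P).card) = (m+1) * pc A (m+1) := by
  have hsig : ((Finset.univ.filter fun Q : Finset (Finset α) =>
      Q.card = m + 1 ∧ ∅ ∉ Q ∧ (Q : Set (Finset α)).PairwiseDisjoint id ∧
        Q.sup id = A).sigma fun Q => Q).card = (m+1) * pc A (m+1) := by
    rw [Finset.card_sigma]
    rw [Finset.sum_congr rfl (fun Q hQ => (Finset.mem_filter.mp hQ).2.1)]
    rw [Finset.sum_const, smul_eq_mul, mul_comm]
    rfl
  rw [← hsig]
  apply Finset.card_nbij'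
    (i := fun P => ⟨insert (((P.filter fun B => a ∈ B).sup id).erase a)
        (P.erase ((P.filter fun B => a ∈ B).sup id)),
      ((P.filter fun B => a ∈ B).sup id).erase a⟩)
    (j := fun z => insert (insert a z.2) (z.1.erase z.2))
  · -- forward membership
    intro P hP
    simp only [Finset.mem_coe, Finset.mem_filter, Finset.mem_univ, true_and] at hP
    obtain ⟨⟨hcard, hne, hpd, hsup⟩, hnot⟩ := hP
    obtain ⟨hbP, hab, hbuniq⟩ := B0_spec hpd hsup
    set b := (P.filter fun B => a ∈ B).sup id with hb
    set B := b.erase a with hB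
    have hbne : b ≠ {a} := fun h => hnot (h ▸ hbP)
    have hBne : B.Nonempty := by
      rw [Finset.nonempty_iff_ne_empty]
      intro h
      apply hbne
      ext x
      simp only [Finset.mem_singleton]
      constructor
      · intro hxb
        by_contra hxa
        have : x ∈ B := Finset.mem_erase.mpr ⟨hxa, hxb⟩
        rw [h] at this
        exact absurd this (Finset.notMem_empty x)
      · rintro rfl; exact hab
    have hBsub : B ⊆ b := Finset.erase_subset _ _
    have hBnotP : B ∉ P := by
      intro hBP
      have hBneb : B ≠ b := by
        intro h
        have : a ∈ B := h ▸ hab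
        exact (Finset.mem_erase.mp this).1 rfl
      have hd : _root_.Disjoint (id B) (id b) := hpd hBP hbP hBneb
      obtain ⟨x, hx⟩ := hBne
      exact (Finset.disjoint_left.mp hd hx) (hBsub hx)
    have hBnotE : B ∉ P.erase b := fun h => hBnotP (Finset.mem_of_mem_erase h)
    rw [Finset.mem_coe, Finset.mem_sigma]
    constructor
    · simp only [Finset.mem_filter, Finset.mem_univ, true_and]
      refine ⟨?_, ?_, ?_, ?_⟩
      · rw [Finset.card_insert_of_notMem hBnotE, Finset.card_erase_of_mem hbP, hcard]
        omega
      · intro h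
        rcases Finset.mem_insert.mp h with h | h
        · exact hBne.ne_empty h.symm
        · exact hne (Finset.mem_of_mem_erase h)
      · rw [Finset.coe_insert]
        apply (hpd.subset (Finset.coe_subset.mpr (Finset.erase_subset _ _))).insert
        intro C hC hCne
        have hCP : C ∈ P := Finset.mem_of_mem_erase (by exact_mod_cast hC)
        have hCb : C ≠ b := (Finset.mem_erase.mp (by exact_mod_cast hC)).1
        have hd : _root_.Disjoint (id b) (id C) := hpd hbP hCP (fun h => hCb h.symm)
        exact hd.mono_left (by exact_mod_cast hBsub)
      · rw [Finset.sup_insert]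
        ext x
        simp only [id_eq, Finset.sup_eq_union, Finset.mem_union]
        constructor
        · rintro (hx | hx)
          · have hxb : x ∈ b := hBsub hx
            have hxa : x ≠ a := (Finset.mem_erase.mp hx).1
            have : x ∈ insert a A := hsup ▸ Finset.mem_sup.mpr ⟨b, hbP, hxb⟩
            rcases Finset.mem_insert.mp this with h | h
            · exact absurd h hxa
            · exact h
          · obtain ⟨C, hC, hxC⟩ := Finset.mem_sup.mp hx
            have hCP : C ∈ P := Finset.mem_of_mem_erase hC
            have hCb : C ≠ b := (Finset.mem_erase.mp hC).1
            have hxa : x ≠ a := by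
              rintro rfl
              exact hCb (hbuniq C hCP hxC)
            have : x ∈ insert a A := hsup ▸ Finset.mem_sup.mpr ⟨C, hCP, hxC⟩
            rcases Finset.mem_insert.mp this with h | h
            · exact absurd h hxa
            · exact h
        · intro hx
          have hxa : x ≠ a := fun h => ha (h ▸ hx)
          have : x ∈ P.sup id := hsup ▸ Finset.mem_insert_of_mem hx
          obtain ⟨C, hCP, hxC⟩ := Finset.mem_sup.mp this
          by_cases hCb : C = b
          · subst hCb
            exact Or.inl (Finset.mem_erase.mpr ⟨hxa, hxC⟩)
          · exact Or.inr (Finset.mem_sup.mpr ⟨C, Finset.mem_erase.mpr ⟨hCb, hCP⟩, hxC⟩)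
    · exact Finset.mem_insert_self _ _
  · -- backward membership
    rintro ⟨Q, B⟩ hz
    rw [Finset.mem_coe, Finset.mem_sigma] at hz
    obtain ⟨hQ, hBQ⟩ := hz
    change B ∈ Q at hBQ
    simp only [Finset.mem_filter, Finset.mem_univ, true_and] at hQ
    obtain ⟨hcard, hne, hpd, hsup⟩ := hQ
    have haQ : ∀ C ∈ Q, a ∉ C := fun C hC haC => ha (block_subset hsup hC haC)
    have haB : a ∉ B := haQ B hBQ
    have hnotinQ : insert a B ∉ Q := fun h => (haQ _ h) (Finset.mem_insert_self a B)
    have hnotinE : insert a B ∉ Q.erase B := fun h => hnotinQ (Finset.mem_of_mem_erase h)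
    simp only [Finset.mem_coe, Finset.mem_filter, Finset.mem_univ, true_and]
    refine ⟨⟨?_, ?_, ?_, ?_⟩, ?_⟩
    · rw [Finset.card_insert_of_notMem hnotinE, Finset.card_erase_of_mem hBQ, hcard]
      omega
    · intro h
      rcases Finset.mem_insert.mp h with h | h
      · exact (Finset.insert_ne_empty a B) h.symm
      · exact hne (Finset.mem_of_mem_erase h)
    · rw [Finset.coe_insert]
      apply (hpd.subset (Finset.coe_subset.mpr (Finset.erase_subset _ _))).insert
      intro C hC _
      have hCQ : C ∈ Q := Finset.mem_of_mem_erase (by exact_mod_cast hC)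
      have hCB : C ≠ B := (Finset.mem_erase.mp (by exact_mod_cast hC)).1
      have hd : _root_.Disjoint (id B) (id C) := hpd hBQ hCQ (fun h => hCB h.symm)
      simp only [id_eq] at hd ⊢
      rw [Finset.disjoint_insert_left]
      exact ⟨haQ C hCQ, hd⟩
    · rw [Finset.sup_insert]
      simp only [id_eq, Finset.sup_eq_union]
      rw [Finset.insert_union]
      have hQs : B ∪ (Q.erase B).sup id = Q.sup id := by
        conv_rhs => rw [← Finset.insert_erase hBQ]
        rw [Finset.sup_insert]
        simp only [id_eq, Finset.sup_eq_union]
      rw [hQs, hsup]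
    · intro h
      rcases Finset.mem_insert.mp h with h | h
      · have : B = ∅ := by
          have hsub : B ⊆ {a} := by
            rw [h]; exact Finset.subset_insert a B
          rcases Finset.subset_singleton_iff.mp hsub with h' | h'
          · exact h'
          · rw [h'] at haB
            exact absurd (Finset.mem_singleton_self a) haB
        exact hne (this ▸ hBQ)
      · exact (haQ _ (Finset.mem_of_mem_erase h)) (Finset.mem_singleton_self a)
  · -- left inverse
    intro P hP
    simp only [Finset.mem_coe, Finset.mem_filter, Finset.mem_univ, true_and] at hP
    obtain ⟨⟨hcard, hne, hpd, hsup⟩, hnot⟩ := hP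
    obtain ⟨hbP, hab, hbuniq⟩ := B0_spec hpd hsup
    set b := (P.filter fun B => a ∈ B).sup id with hb
    set B := b.erase a with hB
    have hBnotP : B ∉ P.erase b := by
      intro h
      have hBP : B ∈ P := Finset.mem_of_mem_erase h
      have hBneb : B ≠ b := (Finset.mem_erase.mp h).1
      have hbne : b ≠ {a} := fun hh => hnot (hh ▸ hbP)
      have hBne : B.Nonempty := by
        rw [Finset.nonempty_iff_ne_empty]
        intro hh
        exact hne (hh ▸ hBP)
      have hd : _root_.Disjoint (id B) (id b) := hpd hBP hbP hBneb
      obtain ⟨x, hx⟩ := hBne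
      exact (Finset.disjoint_left.mp hd hx) (Finset.erase_subset _ _ hx)
    show insert (insert a B) ((insert B (P.erase b)).erase B) = P
    rw [Finset.erase_insert hBnotP]
    rw [show insert a B = b from Finset.insert_erase hab]
    exact Finset.insert_erase hbP
  · -- right inverse
    rintro ⟨Q, B⟩ hz
    rw [Finset.mem_coe, Finset.mem_sigma] at hz
    obtain ⟨hQ, hBQ⟩ := hz
    change B ∈ Q at hBQ
    simp only [Finset.mem_filter, Finset.mem_univ, true_and] at hQ
    obtain ⟨hcard, hne, hpd, hsup⟩ := hQ
    have haQ : ∀ C ∈ Q, a ∉ C := fun C hC haC => ha (block_subset hsup hC haC)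
    have haB : a ∉ B := haQ B hBQ
    have hnotinE : insert a B ∉ Q.erase B :=
      fun h => (haQ _ (Finset.mem_of_mem_erase h)) (Finset.mem_insert_self a B)
    set P := insert (insert a B) (Q.erase B) with hPdef
    have hfilter : P.filter (fun C => a ∈ C) = {insert a B} := by
      ext C
      simp only [Finset.mem_filter, Finset.mem_singleton]
      constructor
      · rintro ⟨hCP, haC⟩
        rcases Finset.mem_insert.mp hCP with h | h
        · exact h
        · exact absurd haC (haQ _ (Finset.mem_of_mem_erase h))
      · rintro rfl
        exact ⟨Finset.mem_insert_self _ _, Finset.mem_insert_self a B⟩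
    have hb' : (P.filter fun C => a ∈ C).sup id = insert a B := by
      rw [hfilter, Finset.sup_singleton]
      rfl
    have h1 : ((P.filter fun C => a ∈ C).sup id).erase a = B := by
      rw [hb']
      exact Finset.erase_insert haB
    have h2 : P.erase ((P.filter fun C => a ∈ C).sup id) = Q.erase B := by
      rw [hb', hPdef]
      exact Finset.erase_insert hnotinE
    show (⟨insert (((P.filter fun C => a ∈ C).sup id).erase a)
        (P.erase ((P.filter fun C => a ∈ C).sup id)),
      ((P.filter fun C => a ∈ C).sup id).erase a⟩ :
        (_ : Finset (Finset α)) × Finset α) = ⟨Q, B⟩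
    rw [h1, h2, Finset.insert_erase hBQ]



lemma pc_rec {A : Finset α} {a : α} (ha : a ∉ A) (m : ℕ) :
    pc (insert a A) (m+1) = (m+1) * pc A (m+1) + pc A m := by
  unfold pc
  rw [← Finset.card_filter_add_card_filter_not (p := fun P => {a} ∈ P),
    Finset.filter_filter, Finset.filter_filter, pc_claim1 ha m, pc_claim2 ha m]
  unfold pc
  omega

lemma pc_eq_S' (A : Finset α) : ∀ m, pc A m = S' A.card m := by
  induction A using Finset.induction_on with
  | empty =>
    intro m
    rw [pc_empty, Finset.card_empty]
    rcases m with _ | m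
    · rfl
    · rfl
  | @insert a A ha ih =>
    intro m
    rcases m with _ | m
    · rw [pc_insert_zero, Finset.card_insert_of_notMem ha]
      rfl
    · rw [pc_rec ha, Finset.card_insert_of_notMem ha, ih, ih]
      rfl


end Part

end StirlingAux

/-- `∑_{k=m}^n c(n,k) S(k,m) = C(n,m) (n-1)^{\underline{n-m}}`. -/
theorem stirling_first_second_sum (n m : ℕ) (hm : 1 ≤ m) (hmn : m ≤ n) :
    ∑ k ∈ Finset.Icc m n, stirlingFirst n k * stirlingSecond k m =
      n.choose m * (n - 1).descFactorial (n - m) := by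
  have h1 : ∀ k, stirlingFirst n k = StirlingAux.c' n k := by
    intro k
    have e : stirlingFirst n k = StirlingAux.sf n k := by
      unfold stirlingFirst StirlingAux.sf
      congr 1
    rw [e, StirlingAux.sf_eq_c']
  have h2 : ∀ k, stirlingSecond k m = StirlingAux.S' k m := by
    intro k
    have e : stirlingSecond k m = StirlingAux.pc (Finset.univ : Finset (Fin k)) m := by
      unfold stirlingSecond StirlingAux.pc
      congr 1
    rw [e, StirlingAux.pc_eq_S', Finset.card_univ, Fintype.card_fin]
  have h3 : ∑ k ∈ Finset.Icc m n, stirlingFirst n k * stirlingSecond k m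
      = StirlingAux.A n m := by
    rw [StirlingAux.A]
    exact Finset.sum_congr rfl (fun k _ => by rw [h1 k, h2 k])
  rw [h3, StirlingAux.A_eq n m hm hmn]
end

section
/- Let M be a matroid of rank r on a finite ground set E with characteristic polynomial χ_M(q) = Σ_{S ⊆ E} (-1)^{|S|} q^{r - rk_M(S)}, and let tr(M) be its truncation, with rank function rk_{tr(M)}(S) = min(rk_M(S), r-1). Then q · χ_{tr(M)}(q) = χ_M(q) + (q-1) · χ_M(0). -/
open scoped Classical
open Polynomial

open Polynomial in
/-- `q χ_{tr(M)}(q) = χ_M(q) + (q-1) χ_M(0)`. -/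
theorem truncation_charPoly {α : Type*} [DecidableEq α]
    (M : FinMatroid α) (r : ℕ) (hr : M.rk M.E = r) (hr1 : 1 ≤ r) :
    X * (M.truncation).charPoly =
      M.charPoly + (X - C 1) * C (M.charPoly.eval 0) := by
  classical
  unfold FinMatroid.charPoly FinMatroid.charPolyAux
  have hE : M.truncation.E = M.E := rfl
  have hrkT : ∀ S, M.truncation.rk S = min (M.rk S) (r - 1) := by
    intro S; simp [FinMatroid.truncation, hr]
  rw [hE, Finset.mul_sum, eval_finset_sum, map_sum, Finset.mul_sum,
    ← Finset.sum_add_distrib]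
  refine Finset.sum_congr rfl fun S hS => ?_
  have hSle : M.rk S ≤ r := hr ▸ M.rk_mono (Finset.mem_powerset.mp hS)
  rw [hrkT M.E, hrkT S, hr]
  have hminE : min r (r - 1) = r - 1 := by omega
  rw [hminE]
  rcases eq_or_lt_of_le hSle with heq | hlt
  · rw [heq, hminE]
    simp only [Nat.sub_self, pow_zero, eval_mul, eval_pow, eval_one, eval_neg,
      mul_one, one_mul, map_pow, map_neg, map_one]
    ring
  · have hmin : min (M.rk S) (r - 1) = M.rk S := by omega
    have hpos : r - M.rk S ≠ 0 := by omega
    rw [hmin]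
    have hexp : r - M.rk S = (r - 1 - M.rk S) + 1 := by omega
    simp only [eval_mul, eval_pow, eval_X, eval_neg, eval_one, zero_pow hpos,
      mul_zero, map_zero, add_zero]
    rw [hexp]
    ring
end

section
/- Let M be a matroid on finite ground set E. Define Y_M(s) = Σ_{F ∈ L(M)} μ(F, E) Z^⊤_{M|F}(s), where μ is the Möbius function of the lattice of flats L(M). Then Y_M satisfies the recurrence Y_M(s) = (-1/(|E|s + rk(M))) · Σ_{F proper flat of M} (|E|s + rk(F)) · Y_{M|F}(s). -/
open scoped Classical
open Polynomial

namespace FinMatroid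

variable {α : Type*} [DecidableEq α]

lemma restrict_restrict (M : FinMatroid α) (F G : Finset α) :
    (M.restrict F).restrict G = M.restrict G := rfl

lemma restrict_self (M : FinMatroid α) : M.restrict M.E = M := rfl

lemma isFlat_E (M : FinMatroid α) : M.IsFlat M.E :=
  ⟨subset_rfl, fun x hx hx' => absurd hx hx'⟩

lemma mem_flats_iff {M : FinMatroid α} {F : Finset α} : F ∈ M.flats ↔ M.IsFlat F := by
  simp only [flats, Finset.mem_filter, Finset.mem_powerset]
  exact ⟨fun h => h.2, fun h => ⟨h.1, h⟩⟩

lemma E_mem_flats (M : FinMatroid α) : M.E ∈ M.flats := mem_flats_iff.2 M.isFlat_E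

lemma subset_E_of_mem_flats {M : FinMatroid α} {F : Finset α} (h : F ∈ M.flats) : F ⊆ M.E :=
  (mem_flats_iff.1 h).1

lemma isFlat_restrict_iff {M : FinMatroid α} {F G : Finset α} (hF : M.IsFlat F) :
    (M.restrict F).IsFlat G ↔ M.IsFlat G ∧ G ⊆ F := by
  constructor
  · rintro ⟨hGF, h2⟩
    refine ⟨⟨hGF.trans hF.1, fun x hxE hxG => ?_⟩, hGF⟩
    by_cases hxF : x ∈ F
    · exact h2 x hxF hxG
    · -- x ∈ E \ F
      by_contra hle
      have h1 : M.rk G ≤ M.rk (insert x G) := M.rk_mono (Finset.subset_insert _ _)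
      have heq : M.rk (insert x G) = M.rk G := by omega
      have hsub := M.rk_submod F (insert x G)
      have hu : F ∪ insert x G = insert x F := by
        ext a
        simp only [Finset.mem_union, Finset.mem_insert]
        constructor
        · rintro (h | h | h)
          · exact Or.inr h
          · exact Or.inl h
          · exact Or.inr (hGF h)
        · rintro (h | h)
          · exact Or.inr (Or.inl h)
          · exact Or.inl h
      have hi : F ∩ insert x G = G := by
        ext a
        simp only [Finset.mem_inter, Finset.mem_insert]
        constructor
        · rintro ⟨haF, rfl | haG⟩
          · exact absurd haF hxF
          · exact haG
        · intro haG
          exact ⟨hGF haG, Or.inr haG⟩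
      rw [hu, hi, heq] at hsub
      have := hF.2 x hxE hxF
      omega
  · rintro ⟨hfl, hGF⟩
    exact ⟨hGF, fun x hxF hxG => hfl.2 x (hF.1 hxF) hxG⟩

lemma flats_restrict {M : FinMatroid α} {F : Finset α} (hF : M.IsFlat F) :
    (M.restrict F).flats = M.flats.filter (fun G => G ⊆ F) := by
  ext G
  simp only [flats, Finset.mem_filter, Finset.mem_powerset]
  constructor
  · rintro ⟨hGF, hfl⟩
    obtain ⟨h1, h2⟩ := (isFlat_restrict_iff hF).1 hfl
    exact ⟨⟨h1.1, h1⟩, h2⟩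
  · rintro ⟨⟨hGE, hfl⟩, hGF⟩
    exact ⟨hGF, (isFlat_restrict_iff hF).2 ⟨hfl, hGF⟩⟩

end FinMatroid
namespace FinMatroid

variable {α : Type*} [DecidableEq α]

lemma mobius_step {μ : FinMatroid α → Finset α → ℤ} (hμ : IsFlatMobius μ)
    (M : FinMatroid α) (G : Finset α) (hG : M.IsFlat G)
    (IH : ∀ G', M.IsFlat G' → G ⊆ G' → G ≠ G' →
      (∑ F ∈ M.flats.filter (fun F => G' ⊆ F), μ (M.restrict F) G')
        = if G' = M.E then 1 else 0) :
    (∑ F ∈ M.flats.filter (fun F => G ⊆ F), μ (M.restrict F) G)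
      = if G = M.E then 1 else 0 := by
  have hGmem : G ∈ M.flats.filter (fun F => G ⊆ F) :=
    Finset.mem_filter.2 ⟨mem_flats_iff.2 hG, subset_rfl⟩
  -- double counting
  have hdc : (∑ F ∈ M.flats.filter (fun F => G ⊆ F),
      ∑ G' ∈ M.flats.filter (fun G' => G' ⊆ F ∧ G ⊆ G'), μ (M.restrict F) G') = 1 := by
    have h1 : ∀ F ∈ M.flats.filter (fun F => G ⊆ F),
        (∑ G' ∈ M.flats.filter (fun G' => G' ⊆ F ∧ G ⊆ G'), μ (M.restrict F) G')
          = if G = F then 1 else 0 := by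
      intro F hFmem
      obtain ⟨hF, hGF⟩ := Finset.mem_filter.1 hFmem
      have hFfl : M.IsFlat F := mem_flats_iff.1 hF
      have hGfl : (M.restrict F).IsFlat G := (isFlat_restrict_iff hFfl).2 ⟨hG, hGF⟩
      have := hμ (M.restrict F) G hGfl
      rw [flats_restrict hFfl, Finset.filter_filter] at this
      exact this
    rw [Finset.sum_congr rfl h1, Finset.sum_ite_eq _ G (fun _ => (1:ℤ)), if_pos hGmem]
  -- swap order of summation
  rw [Finset.sum_comm' (s' := fun G' => M.flats.filter (fun F => G' ⊆ F))
      (t' := M.flats.filter (fun G' => G ⊆ G')) (by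
        intro F G'
        simp only [Finset.mem_filter]
        constructor
        · rintro ⟨⟨hF, hGF⟩, hG', hG'F, hGG'⟩
          exact ⟨⟨hF, hG'F⟩, hG', hGG'⟩
        · rintro ⟨⟨hF, hG'F⟩, hG', hGG'⟩
          exact ⟨⟨hF, hGG'.trans hG'F⟩, hG', hG'F, hGG'⟩)] at hdc
  -- split off G' = G
  rw [← Finset.sum_erase_add _ _ hGmem] at hdc
  have herase : (∑ G' ∈ (M.flats.filter (fun G' => G ⊆ G')).erase G,
      ∑ F ∈ M.flats.filter (fun F => G' ⊆ F), μ (M.restrict F) G')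
        = if G ≠ M.E then 1 else 0 := by
    have h2 : ∀ G' ∈ (M.flats.filter (fun G' => G ⊆ G')).erase G,
        (∑ F ∈ M.flats.filter (fun F => G' ⊆ F), μ (M.restrict F) G')
          = if G' = M.E then 1 else 0 := by
      intro G' hG'
      obtain ⟨hne, hmem⟩ := Finset.mem_erase.1 hG'
      obtain ⟨hfl, hsub⟩ := Finset.mem_filter.1 hmem
      exact IH G' (mem_flats_iff.1 hfl) hsub (Ne.symm hne)
    rw [Finset.sum_congr rfl h2, Finset.sum_ite_eq' _ M.E (fun _ => (1:ℤ))]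
    by_cases hGE : G = M.E
    · rw [if_neg, if_neg (by simpa using hGE)]
      intro hmem
      exact (Finset.mem_erase.1 hmem).1 hGE.symm
    · rw [if_pos, if_pos hGE]
      exact Finset.mem_erase.2 ⟨fun h => hGE h.symm,
        Finset.mem_filter.2 ⟨M.E_mem_flats, hG.1⟩⟩
  rw [herase] at hdc
  by_cases hGE : G = M.E
  · simp only [hGE, if_pos rfl] at hdc ⊢
    simpa using hdc
  · simp only [if_neg hGE] at hdc ⊢
    simp only [if_pos hGE] at hdc
    omega

lemma mobius_sum_top {μ : FinMatroid α → Finset α → ℤ} (hμ : IsFlatMobius μ)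
    (M : FinMatroid α) {G : Finset α} (hG : M.IsFlat G) :
    (∑ F ∈ M.flats.filter (fun F => G ⊆ F), μ (M.restrict F) G)
      = if G = M.E then 1 else 0 := by
  suffices h : ∀ (n : ℕ) (G : Finset α), M.E.card - G.card ≤ n → M.IsFlat G →
      (∑ F ∈ M.flats.filter (fun F => G ⊆ F), μ (M.restrict F) G)
        = if G = M.E then 1 else 0 from h _ G le_rfl hG
  intro n
  induction n with
  | zero =>
    intro G hn hG
    have hcard : M.E.card ≤ G.card := by
      have := Finset.card_le_card hG.1
      omega
    have hGE : G = M.E := Finset.eq_of_subset_of_card_le hG.1 hcard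
    refine mobius_step hμ M G hG ?_
    intro G' hG' hsub hne
    exfalso
    exact hne (subset_antisymm hsub (hGE ▸ hG'.1))
  | succ n ih =>
    intro G hn hG
    refine mobius_step hμ M G hG ?_
    intro G' hG' hsub hne
    refine ih G' ?_ hG'
    have hlt : G.card < G'.card := Finset.card_lt_card (ssubset_of_ne_of_subset hne hsub)
    omega

end FinMatroid
namespace FinMatroid

variable {α : Type*} [DecidableEq α]

lemma Z_restrict_eq_sum_Y {μ : FinMatroid α → Finset α → ℤ}
    {Z Y : FinMatroid α → RatFunc ℚ} (hμ : IsFlatMobius μ) (hY : IsMobiusInv μ Z Y)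
    (M : FinMatroid α) {T : Finset α} (hT : M.IsFlat T) :
    Z (M.restrict T) = ∑ F ∈ M.flats.filter (fun F => F ⊆ T), Y (M.restrict F) := by
  have step1 : ∀ F ∈ M.flats.filter (fun F => F ⊆ T),
      Y (M.restrict F)
        = ∑ G ∈ M.flats.filter (fun G => G ⊆ F),
            (μ (M.restrict F) G : RatFunc ℚ) * Z (M.restrict G) := by
    intro F hF
    obtain ⟨hFfl, _⟩ := Finset.mem_filter.1 hF
    rw [hY (M.restrict F), flats_restrict (mem_flats_iff.1 hFfl)]
    simp only [restrict_restrict]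
  rw [Finset.sum_congr rfl step1]
  rw [Finset.sum_comm' (s' := fun G => M.flats.filter (fun F => F ⊆ T ∧ G ⊆ F))
      (t' := M.flats.filter (fun G => G ⊆ T)) (by
        intro F G
        simp only [Finset.mem_filter]
        constructor
        · rintro ⟨⟨hF, hFT⟩, hG, hGF⟩
          exact ⟨⟨hF, hFT, hGF⟩, hG, hGF.trans hFT⟩
        · rintro ⟨⟨hF, hFT, hGF⟩, hG, hGT⟩
          exact ⟨⟨hF, hFT⟩, hG, hGF⟩)]
  have step2 : ∀ G ∈ M.flats.filter (fun G => G ⊆ T),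
      (∑ F ∈ M.flats.filter (fun F => F ⊆ T ∧ G ⊆ F),
          (μ (M.restrict F) G : RatFunc ℚ) * Z (M.restrict G))
        = (if G = T then 1 else 0) * Z (M.restrict G) := by
    intro G hG
    obtain ⟨hGfl, hGT⟩ := Finset.mem_filter.1 hG
    rw [← Finset.sum_mul]
    congr 1
    have hNG : (M.restrict T).IsFlat G :=
      (isFlat_restrict_iff hT).2 ⟨mem_flats_iff.1 hGfl, hGT⟩
    have hkey := mobius_sum_top hμ (M.restrict T) hNG
    rw [flats_restrict hT, Finset.filter_filter] at hkey
    simp only [restrict_restrict] at hkey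
    rw [show (M.restrict T).E = T from rfl] at hkey
    rw [← Int.cast_sum, hkey]
    simp [apply_ite (fun z : ℤ => (z : RatFunc ℚ))]
  rw [Finset.sum_congr rfl step2]
  simp only [ite_mul, one_mul, zero_mul]
  rw [Finset.sum_ite_eq' _ T (fun G => Z (M.restrict G))]
  have hmem : T ∈ M.flats.filter (fun G => G ⊆ T) :=
    Finset.mem_filter.2 ⟨mem_flats_iff.2 hT, subset_rfl⟩
  rw [if_pos hmem]

end FinMatroid
namespace FinMatroid

variable {α : Type*} [DecidableEq α]

lemma sum_powerset_neg_one_pow_card_rat {β : Type*} [DecidableEq β] (A : Finset β) :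
    ∑ S ∈ A.powerset, (-1 : ℚ)^S.card = if A = ∅ then 1 else 0 := by
  have h := congrArg (fun z : ℤ => (z : ℚ)) (Finset.sum_powerset_neg_one_pow_card (x := A))
  simp only [Int.cast_sum, Int.cast_pow, Int.cast_neg, Int.cast_one,
    apply_ite (fun z : ℤ => (z : ℚ)), Int.cast_zero] at h
  exact h

lemma rk_insert_eq_of_subset (M : FinMatroid α) {F A : Finset α} {x : α}
    (hFA : F ⊆ A) (hx : M.rk (insert x F) = M.rk F) :
    M.rk (insert x A) = M.rk A := by
  have hsub := M.rk_submod (insert x F) A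
  have hu : insert x F ∪ A = insert x A := by
    ext a
    simp only [Finset.mem_union, Finset.mem_insert]
    constructor
    · rintro ((rfl | h) | h)
      · exact Or.inl rfl
      · exact Or.inr (hFA h)
      · exact Or.inr h
    · rintro (rfl | h)
      · exact Or.inl (Or.inl rfl)
      · exact Or.inr h
  have hi : F ⊆ insert x F ∩ A := fun a ha =>
    Finset.mem_inter.2 ⟨Finset.mem_insert_of_mem ha, hFA ha⟩
  have h1 : M.rk F ≤ M.rk (insert x F ∩ A) := M.rk_mono hi
  have h2 : M.rk A ≤ M.rk (insert x A) := M.rk_mono (Finset.subset_insert _ _)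
  rw [hu, hx] at hsub
  omega

lemma charPolyAux_eq_zero {E : Finset α} {rk : Finset α → ℕ} {x : α} (hx : x ∈ E)
    (h : ∀ S ⊆ E.erase x, rk (insert x S) = rk S) :
    charPolyAux E rk = 0 := by
  unfold charPolyAux
  rw [← Finset.insert_erase hx, Finset.sum_powerset_insert (Finset.notMem_erase x E)]
  have hterm : ∀ S ∈ (E.erase x).powerset,
      ((-1 : Polynomial ℚ) ^ (insert x S).card
          * Polynomial.X ^ (rk (insert x (E.erase x)) - rk (insert x S)))
        = -((-1 : Polynomial ℚ) ^ S.card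
          * Polynomial.X ^ (rk (insert x (E.erase x)) - rk S)) := by
    intro S hS
    have hSsub : S ⊆ E.erase x := Finset.mem_powerset.1 hS
    have hxS : x ∉ S := fun hmem => Finset.notMem_erase x E (hSsub hmem)
    rw [h S hSsub, Finset.card_insert_of_notMem hxS, pow_succ]
    ring
  rw [Finset.sum_congr rfl hterm]
  simp

lemma charPolyAux_eval_one {E : Finset α} (rk : Finset α → ℕ) (hE : E.Nonempty) :
    (charPolyAux E rk).eval 1 = 0 := by
  unfold charPolyAux
  rw [Polynomial.eval_finset_sum]
  have h : ∀ S ∈ E.powerset,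
      ((-1 : Polynomial ℚ)^S.card * Polynomial.X ^ (rk E - rk S)).eval 1
        = (-1 : ℚ)^S.card := by
    intro S _
    simp
  rw [Finset.sum_congr rfl h, sum_powerset_neg_one_pow_card_rat,
    if_neg (Finset.nonempty_iff_ne_empty.1 hE)]

lemma reducedCharPoly_eval_one {p : Polynomial ℚ} (h : p.eval 1 = 0) :
    (reducedCharPoly p).eval 1 = (Polynomial.derivative p).eval 1 := by
  unfold reducedCharPoly
  have hmon : (Polynomial.X - Polynomial.C (1 : ℚ)).Monic := Polynomial.monic_X_sub_C 1
  have hp : p = (Polynomial.X - Polynomial.C 1) * (p /ₘ (Polynomial.X - Polynomial.C 1)) := by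
    have h2 := Polynomial.modByMonic_add_div p (Polynomial.X - Polynomial.C (1 : ℚ))
    rw [Polynomial.modByMonic_X_sub_C_eq_C_eval, h, map_zero, zero_add] at h2
    exact h2.symm
  conv_rhs => rw [hp]
  rw [Polynomial.derivative_mul]
  simp

lemma redCharContractOne_eq (M : FinMatroid α) {F : Finset α} (hFE : F ⊆ M.E)
    (hne : F ≠ M.E) :
    M.redCharContractOne F
      = ∑ S ∈ (M.E \ F).powerset,
          (-1 : ℚ)^S.card * ((M.rk M.E - M.rk (S ∪ F) : ℕ) : ℚ) := by
  have hEF : (M.E \ F).Nonempty := by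
    rw [Finset.sdiff_nonempty]
    intro hc
    exact hne (subset_antisymm hFE hc)
  have heval : (M.contractCharPoly F).eval 1 = 0 := charPolyAux_eval_one _ hEF
  unfold redCharContractOne
  rw [reducedCharPoly_eval_one heval]
  unfold contractCharPoly charPolyAux
  rw [Polynomial.derivative_sum, Polynomial.eval_finset_sum]
  refine Finset.sum_congr rfl fun S hS => ?_
  have hS' : S ⊆ M.E \ F := Finset.mem_powerset.1 hS
  have hd : ∀ (c n : ℕ),
      (Polynomial.derivative ((-1 : Polynomial ℚ)^c * Polynomial.X ^ n)).eval 1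
        = (-1 : ℚ)^c * n := by
    intro c n
    have hC : ((-1 : Polynomial ℚ)^c) = Polynomial.C ((-1 : ℚ)^c) := by
      rw [show (-1 : Polynomial ℚ) = Polynomial.C (-1) by simp, ← Polynomial.C_pow]
    rw [hC, Polynomial.derivative_C_mul, Polynomial.derivative_X_pow]
    simp
  rw [hd]
  congr 1
  have h1 : M.E \ F ∪ F = M.E := Finset.sdiff_union_of_subset hFE
  have h2 : S ∪ F ⊆ M.E := Finset.union_subset (hS'.trans Finset.sdiff_subset) hFE
  have h3 : M.rk F ≤ M.rk (S ∪ F) := M.rk_mono Finset.subset_union_right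
  have h4 : M.rk (S ∪ F) ≤ M.rk M.E := M.rk_mono h2
  have h5 : M.rk F ≤ M.rk M.E := M.rk_mono hFE
  congr 1
  show (M.rk (M.E \ F ∪ F) - M.rk F) - (M.rk (S ∪ F) - M.rk F)
      = M.rk M.E - M.rk (S ∪ F)
  rw [h1]
  omega

lemma redCharContractOne_ground (M : FinMatroid α) : M.redCharContractOne M.E = 0 := by
  have h1 : M.contractCharPoly M.E = 1 := by
    unfold contractCharPoly charPolyAux
    simp [Finset.sdiff_self]
  unfold redCharContractOne reducedCharPoly
  rw [h1]
  have h2 : (1 : Polynomial ℚ) /ₘ (Polynomial.X - Polynomial.C 1) = 0 := by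
    rw [Polynomial.divByMonic_eq_zero_iff (Polynomial.monic_X_sub_C 1),
      Polynomial.degree_X_sub_C, Polynomial.degree_one]
    decide
  rw [h2, Polynomial.eval_zero]

lemma redCharContractOne_eq_zero_of_not_flat (M : FinMatroid α) {F : Finset α}
    (hFE : F ⊆ M.E) (h : ¬ M.IsFlat F) : M.redCharContractOne F = 0 := by
  unfold IsFlat at h
  push_neg at h
  obtain ⟨x, hxE, hxF, hle⟩ := h hFE
  have hmon : M.rk F ≤ M.rk (insert x F) := M.rk_mono (Finset.subset_insert _ _)
  have heq : M.rk (insert x F) = M.rk F := by omega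
  have hzero : M.contractCharPoly F = 0 := by
    apply charPolyAux_eq_zero (x := x) (Finset.mem_sdiff.2 ⟨hxE, hxF⟩)
    intro S hSsub
    have hre : insert x S ∪ F = insert x (S ∪ F) := by
      ext a
      simp only [Finset.mem_union, Finset.mem_insert]
      tauto
    show M.rk (insert x S ∪ F) - M.rk F = M.rk (S ∪ F) - M.rk F
    rw [hre, M.rk_insert_eq_of_subset Finset.subset_union_right heq]
  unfold redCharContractOne reducedCharPoly
  rw [hzero, Polynomial.zero_divByMonic, Polynomial.eval_zero]

end FinMatroid
namespace FinMatroid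

variable {α : Type*} [DecidableEq α]

lemma sum_redChar (M : FinMatroid α) {G : Finset α} (hG : G ⊆ M.E) :
    (∑ F ∈ M.properFlats.filter (fun F => G ⊆ F), M.redCharContractOne F)
      = (M.rk M.E : ℚ) - (M.rk G : ℚ) := by
  -- Step 1: extend the sum from proper flats to all subsets of E containing G
  have hstep1 : (∑ F ∈ M.properFlats.filter (fun F => G ⊆ F), M.redCharContractOne F)
      = ∑ F ∈ M.E.powerset.filter (fun F => G ⊆ F), M.redCharContractOne F := by
    apply Finset.sum_subset
    · intro F hF
      simp only [properFlats, flats, Finset.mem_filter, Finset.mem_powerset] at hF ⊢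
      exact ⟨hF.1.1.1, hF.2⟩
    · intro F hF hF'
      simp only [Finset.mem_filter, Finset.mem_powerset] at hF
      by_cases hFE : F = M.E
      · rw [hFE]
        exact M.redCharContractOne_ground
      · apply M.redCharContractOne_eq_zero_of_not_flat hF.1
        intro hflat
        apply hF'
        exact Finset.mem_filter.2
          ⟨Finset.mem_filter.2 ⟨mem_flats_iff.2 hflat, hFE⟩, hF.2⟩
  -- Step 2: the explicit formula for each term
  have hform : ∀ F ∈ M.E.powerset.filter (fun F => G ⊆ F),
      M.redCharContractOne F
        = ∑ S ∈ (M.E \ F).powerset,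
            (-1 : ℚ)^S.card * ((M.rk M.E - M.rk (S ∪ F) : ℕ) : ℚ) := by
    intro F hF
    simp only [Finset.mem_filter, Finset.mem_powerset] at hF
    by_cases hFE : F = M.E
    · subst hFE
      rw [M.redCharContractOne_ground]
      simp [Finset.sdiff_self]
    · exact M.redCharContractOne_eq hF.1 hFE
  -- Step 3: reindex the inner sum by T = S ∪ F
  have hreindex : ∀ F ∈ M.E.powerset.filter (fun F => G ⊆ F),
      (∑ S ∈ (M.E \ F).powerset,
          (-1 : ℚ)^S.card * ((M.rk M.E - M.rk (S ∪ F) : ℕ) : ℚ))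
        = ∑ T ∈ M.E.powerset.filter (fun T => F ⊆ T),
            (-1 : ℚ)^((T \ F).card) * ((M.rk M.E - M.rk T : ℕ) : ℚ) := by
    intro F hF
    simp only [Finset.mem_filter, Finset.mem_powerset] at hF
    have hcancel : ∀ S ∈ (M.E \ F).powerset, (S ∪ F) \ F = S := by
      intro S hS
      have hS' : S ⊆ M.E \ F := Finset.mem_powerset.1 hS
      ext a
      simp only [Finset.mem_sdiff, Finset.mem_union]
      constructor
      · rintro ⟨h1 | h1, h2⟩
        · exact h1
        · exact absurd h1 h2
      · intro ha
        exact ⟨Or.inl ha, fun haF => (Finset.mem_sdiff.1 (hS' ha)).2 haF⟩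
    refine Finset.sum_bij' (fun S _ => S ∪ F) (fun T _ => T \ F) ?_ ?_ ?_ ?_ ?_
    · intro S hS
      have hS' : S ⊆ M.E \ F := Finset.mem_powerset.1 hS
      exact Finset.mem_filter.2
        ⟨Finset.mem_powerset.2 (Finset.union_subset (hS'.trans Finset.sdiff_subset) hF.1),
          Finset.subset_union_right⟩
    · intro T hT
      obtain ⟨hTE, _⟩ := Finset.mem_filter.1 hT
      exact Finset.mem_powerset.2
        (Finset.sdiff_subset_sdiff (Finset.mem_powerset.1 hTE) subset_rfl)
    · intro S hS
      exact hcancel S hS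
    · intro T hT
      obtain ⟨_, hFT⟩ := Finset.mem_filter.1 hT
      exact Finset.sdiff_union_of_subset hFT
    · intro S hS
      rw [hcancel S hS]
  rw [hstep1, Finset.sum_congr rfl hform, Finset.sum_congr rfl hreindex]
  -- Step 4: swap the order of summation
  rw [Finset.sum_comm' (s' := fun T => M.E.powerset.filter (fun F => G ⊆ F ∧ F ⊆ T))
      (t' := M.E.powerset.filter (fun T => G ⊆ T)) (by
        intro F T
        simp only [Finset.mem_filter, Finset.mem_powerset]
        constructor
        · rintro ⟨⟨hFE, hGF⟩, hTE, hFT⟩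
          exact ⟨⟨hFE, hGF, hFT⟩, hTE, hGF.trans hFT⟩
        · rintro ⟨⟨hFE, hGF, hFT⟩, hTE, hGT⟩
          exact ⟨⟨hFE, hGF⟩, hTE, hFT⟩)]
  -- Step 5: the inner alternating sum collapses
  have hinner : ∀ T ∈ M.E.powerset.filter (fun T => G ⊆ T),
      (∑ F ∈ M.E.powerset.filter (fun F => G ⊆ F ∧ F ⊆ T),
          (-1 : ℚ)^((T \ F).card) * ((M.rk M.E - M.rk T : ℕ) : ℚ))
        = (if T = G then 1 else 0) * ((M.rk M.E - M.rk T : ℕ) : ℚ) := by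
    intro T hT
    simp only [Finset.mem_filter, Finset.mem_powerset] at hT
    rw [← Finset.sum_mul]
    congr 1
    have hbij : (∑ F ∈ M.E.powerset.filter (fun F => G ⊆ F ∧ F ⊆ T),
        (-1 : ℚ)^((T \ F).card)) = ∑ S ∈ (T \ G).powerset, (-1 : ℚ)^S.card := by
      refine Finset.sum_bij' (fun F _ => T \ F) (fun S _ => T \ S) ?_ ?_ ?_ ?_ ?_
      · intro F hF
        simp only [Finset.mem_filter, Finset.mem_powerset] at hF
        exact Finset.mem_powerset.2 (Finset.sdiff_subset_sdiff subset_rfl hF.2.1)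
      · intro S hS
        have hS' : S ⊆ T \ G := Finset.mem_powerset.1 hS
        simp only [Finset.mem_filter, Finset.mem_powerset]
        refine ⟨Finset.sdiff_subset.trans hT.1, ?_, Finset.sdiff_subset⟩
        intro a ha
        refine Finset.mem_sdiff.2 ⟨hT.2 ha, fun haS => ?_⟩
        exact (Finset.mem_sdiff.1 (hS' haS)).2 ha
      · intro F hF
        simp only [Finset.mem_filter, Finset.mem_powerset] at hF
        exact Finset.sdiff_sdiff_eq_self hF.2.2
      · intro S hS
        have hS' : S ⊆ T \ G := Finset.mem_powerset.1 hS
        exact Finset.sdiff_sdiff_eq_self (hS'.trans Finset.sdiff_subset)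
      · intro F _
        rfl
    rw [hbij, sum_powerset_neg_one_pow_card_rat]
    by_cases hTG : T = G
    · subst hTG
      simp
    · rw [if_neg hTG, if_neg]
      intro hempty
      exact hTG (subset_antisymm (Finset.sdiff_eq_empty_iff_subset.1 hempty) hT.2)
  rw [Finset.sum_congr rfl hinner]
  simp only [ite_mul, one_mul, zero_mul]
  rw [Finset.sum_ite_eq' _ G (fun T => ((M.rk M.E - M.rk T : ℕ) : ℚ))]
  have hmem : G ∈ M.E.powerset.filter (fun T => G ⊆ T) :=
    Finset.mem_filter.2 ⟨Finset.mem_powerset.2 hG, subset_rfl⟩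
  rw [if_pos hmem, Nat.cast_sub (M.rk_mono hG)]

end FinMatroid
open FinMatroid in
/-- the Möbius inversion `Y_M` of the topological zeta function satisfies
`Y_M(s) = (-1/(|E|s + rk M)) ∑_{F proper flat} (|E|s + rk F) Y_{M|F}(s)`. -/
theorem mobiusInv_recurrence {α : Type*} [DecidableEq α]
    (Z Y : FinMatroid α → RatFunc ℚ) (μ : FinMatroid α → Finset α → ℤ)
    (hZ : IsTopZeta Z) (hμ : IsFlatMobius μ) (hY : IsMobiusInv μ Z Y)
    (M : FinMatroid α) (hL : M.Loopless) (hne : M.E.Nonempty) :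
    Y M = - (∑ F ∈ M.properFlats,
        ((M.E.card : RatFunc ℚ) * RatFunc.X + (M.rk F : RatFunc ℚ)) * Y (M.restrict F)) /
      ((M.E.card : RatFunc ℚ) * RatFunc.X + (M.rk M.E : RatFunc ℚ)) := by
  have hcard : 0 < M.E.card := Finset.card_pos.2 hne
  -- the denominator is nonzero
  have hD0 : ((M.E.card : RatFunc ℚ) * RatFunc.X + (M.rk M.E : RatFunc ℚ)) ≠ 0 := by
    have halg : ((M.E.card : RatFunc ℚ) * RatFunc.X + (M.rk M.E : RatFunc ℚ))
        = algebraMap (Polynomial ℚ) (RatFunc ℚ)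
            (Polynomial.C (M.E.card : ℚ) * Polynomial.X + Polynomial.C (M.rk M.E : ℚ)) := by
      rw [map_add, map_mul, RatFunc.algebraMap_C, RatFunc.algebraMap_C, RatFunc.algebraMap_X,
        map_natCast (RatFunc.C (K := ℚ)), map_natCast (RatFunc.C (K := ℚ))]
    intro hzero
    rw [halg] at hzero
    have hpoly : Polynomial.C (M.E.card : ℚ) * Polynomial.X + Polynomial.C (M.rk M.E : ℚ) = 0 :=
      RatFunc.algebraMap_injective ℚ (by rw [map_zero]; exact hzero)
    have hc := congrArg (fun q => Polynomial.coeff q 1) hpoly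
    simp only [Polynomial.coeff_add, Polynomial.coeff_C_mul, Polynomial.coeff_X_one,
      Polynomial.coeff_C, mul_one, Polynomial.coeff_zero] at hc
    norm_cast at hc
    omega
  -- Z M is the sum of the Y's over flats
  have hfilterE : M.flats.filter (fun F => F ⊆ M.E) = M.flats :=
    Finset.filter_true_of_mem (fun F hF => subset_E_of_mem_flats hF)
  have hZM : Z M = ∑ F ∈ M.flats, Y (M.restrict F) := by
    have h := Z_restrict_eq_sum_Y hμ hY M M.isFlat_E
    rw [restrict_self, hfilterE] at h
    exact h
  -- the zeta recurrence, multiplied out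
  have hZD : ((M.E.card : RatFunc ℚ) * RatFunc.X + (M.rk M.E : RatFunc ℚ)) * Z M
      = ∑ F ∈ M.properFlats, RatFunc.C (M.redCharContractOne F) * Z (M.restrict F) := by
    rw [hZ.2 M hne, mul_comm, div_mul_cancel₀ _ hD0]
  -- rewrite the right hand side of the recurrence via the key identity
  have hswap : (∑ F ∈ M.properFlats, RatFunc.C (M.redCharContractOne F) * Z (M.restrict F))
      = ∑ G ∈ M.flats,
          ((M.rk M.E : RatFunc ℚ) - (M.rk G : RatFunc ℚ)) * Y (M.restrict G) := by
    have h1 : ∀ F ∈ M.properFlats,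
        RatFunc.C (M.redCharContractOne F) * Z (M.restrict F)
          = ∑ G ∈ M.flats.filter (fun G => G ⊆ F),
              RatFunc.C (M.redCharContractOne F) * Y (M.restrict G) := by
      intro F hF
      have hFfl : M.IsFlat F := mem_flats_iff.1 (Finset.mem_filter.1 hF).1
      rw [Z_restrict_eq_sum_Y hμ hY M hFfl, Finset.mul_sum]
    rw [Finset.sum_congr rfl h1]
    rw [Finset.sum_comm' (s' := fun G => M.properFlats.filter (fun F => G ⊆ F))
        (t' := M.flats) (by
          intro F G
          simp only [Finset.mem_filter]
          constructor
          · rintro ⟨hF, hG, hGF⟩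
            exact ⟨⟨hF, hGF⟩, hG⟩
          · rintro ⟨⟨hF, hGF⟩, hG⟩
            exact ⟨hF, hG, hGF⟩)]
    refine Finset.sum_congr rfl fun G hG => ?_
    have hGE : G ⊆ M.E := subset_E_of_mem_flats hG
    rw [← Finset.sum_mul, ← map_sum (RatFunc.C (K := ℚ)) _ _, M.sum_redChar hGE,
      map_sub, map_natCast, map_natCast]
  -- the main claim: the full sum over all flats vanishes
  have hClaim : (∑ F ∈ M.flats,
      ((M.E.card : RatFunc ℚ) * RatFunc.X + (M.rk F : RatFunc ℚ)) * Y (M.restrict F)) = 0 := by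
    have hID : ∀ F ∈ M.flats,
        ((M.E.card : RatFunc ℚ) * RatFunc.X + (M.rk F : RatFunc ℚ)) * Y (M.restrict F)
          = ((M.E.card : RatFunc ℚ) * RatFunc.X + (M.rk M.E : RatFunc ℚ)) * Y (M.restrict F)
            - ((M.rk M.E : RatFunc ℚ) - (M.rk F : RatFunc ℚ)) * Y (M.restrict F) := by
      intro F _
      ring
    rw [Finset.sum_congr rfl hID, Finset.sum_sub_distrib, ← Finset.mul_sum, ← hZM, ← hswap,
      ← hZD]
    exact sub_self _
  -- split off the ground set term
  have hproper : M.properFlats = M.flats.erase M.E := by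
    ext F
    simp only [properFlats, Finset.mem_filter, Finset.mem_erase]
    exact ⟨fun h => ⟨h.2, h.1⟩, fun h => ⟨h.2, h.1⟩⟩
  have hsplit := Finset.sum_erase_add M.flats
      (fun F => ((M.E.card : RatFunc ℚ) * RatFunc.X + (M.rk F : RatFunc ℚ)) * Y (M.restrict F))
      M.E_mem_flats
  rw [hClaim] at hsplit
  simp only [restrict_self] at hsplit
  have hfinal : (∑ F ∈ M.properFlats,
      ((M.E.card : RatFunc ℚ) * RatFunc.X + (M.rk F : RatFunc ℚ)) * Y (M.restrict F))
        = -(((M.E.card : RatFunc ℚ) * RatFunc.X + (M.rk M.E : RatFunc ℚ)) * Y M) := by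
    rw [hproper]
    exact eq_neg_of_add_eq_zero_left hsplit
  rw [hfinal, neg_neg, mul_div_cancel_left₀ _ hD0]
end
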